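/- arXiv:2003.09819 — 5 statements merged into one kernel-verified Lean document; each statement's English description precedes it below -/
import Mathlib

section
/- Let 1 ≤ p < ∞ and let u, v be complex numbers such that |u - v| ≤ 1 and |v| ≤ 1. Then |u - v|^p ≥ |u|^p - max{p, 2}·2^(p-1)·|v|. -/
lemma aux_mvt (p : ℝ) (hp : 1 ≤ p) (a b : ℝ) (ha : 0 ≤ a) (hb : 0 ≤ b)
    (hab : a + b ≤ 2) : (a + b) ^ p - a ^ p ≤ p * 2 ^ (p - 1) * b := by
  have hconv : Convex ℝ (Set.Icc (0:ℝ) 2) := convex_Icc 0 2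
  have hderiv : ∀ x ∈ Set.Icc (0:ℝ) 2,
      HasDerivWithinAt (fun x : ℝ => x ^ p) (p * x ^ (p - 1)) (Set.Icc (0:ℝ) 2) x := by
    intro x hx
    exact ((Real.hasDerivAt_rpow_const (Or.inr hp)).hasDerivWithinAt).congr_deriv
      (by ring)
  have hbound : ∀ x ∈ Set.Icc (0:ℝ) 2, ‖p * x ^ (p - 1)‖ ≤ p * 2 ^ (p - 1) := by
    intro x hx
    rw [Real.norm_eq_abs, abs_mul, abs_of_nonneg (by linarith : (0:ℝ) ≤ p),
      abs_of_nonneg (Real.rpow_nonneg hx.1 _)]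
    exact mul_le_mul_of_nonneg_left
      (Real.rpow_le_rpow hx.1 hx.2 (by linarith)) (by linarith)
  have h1 : a ∈ Set.Icc (0:ℝ) 2 := ⟨ha, by linarith⟩
  have h2 : a + b ∈ Set.Icc (0:ℝ) 2 := ⟨by linarith, hab⟩
  have := hconv.norm_image_sub_le_of_norm_hasDerivWithin_le hderiv hbound h1 h2
  simp only [Real.norm_eq_abs, add_sub_cancel_left, abs_of_nonneg hb] at this
  calc (a + b) ^ p - a ^ p ≤ |(a + b) ^ p - a ^ p| := le_abs_self _
    _ ≤ p * 2 ^ (p - 1) * b := this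

theorem stmt2 (p : ℝ) (hp : 1 ≤ p) (u v : ℂ)
    (huv : ‖u - v‖ ≤ 1) (hv : ‖v‖ ≤ 1) :
    ‖u - v‖ ^ p ≥ ‖u‖ ^ p - max p 2 * 2 ^ (p - 1) * ‖v‖ := by
  set a := ‖u - v‖ with ha
  set b := ‖v‖ with hb
  have ha0 : 0 ≤ a := norm_nonneg _
  have hb0 : 0 ≤ b := norm_nonneg _
  have hu : ‖u‖ ≤ a + b := by
    calc ‖u‖ = ‖(u - v) + v‖ := by ring_nf
      _ ≤ a + b := norm_add_le _ _
  have h1 : ‖u‖ ^ p ≤ (a + b) ^ p :=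
    Real.rpow_le_rpow (norm_nonneg _) hu (by linarith)
  have h2 := aux_mvt p hp a b ha0 hb0 (by linarith)
  have h3 : p * 2 ^ (p - 1) * b ≤ max p 2 * 2 ^ (p - 1) * b := by
    apply mul_le_mul_of_nonneg_right _ hb0
    exact mul_le_mul_of_nonneg_right (le_max_left _ _) (Real.rpow_nonneg (by norm_num) _)
  linarith
end

section
/- Let 1 ≤ p < ∞ and let f : [0,1] → [0,1] have finite total Wiener p-variation. For every ε > 0 there exists η > 0 such that for any finite sequence 0 ≤ x₁ < x₂ < ⋯ < x_m ≤ 1 with f(x_j) < η for all j ∈ {1,…,m}, one has (Σ_{j=1}^{m−1} |f(x_{j+1}) − f(x_j)|^p)^{1/p} < ε. -/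
/-!
Let `V` be the supremum of the `p`-variation sums of `f` and fix a partition `L` of `[0,1]` whose
sum exceeds `V - δ`. Split `f = min f η + (f - min f η)`: both parts are nondecreasing functions
of `f`, so every increment of `f` is the sum of the increments of the parts, and for `p ≥ 1` the
`p`-variation of `f` along any chain dominates the sum of those of the two parts.

Given a chain `X` on which `f < η`, merge it with `L` into a partition `D`. The part `f - min f η`
vanishes on `X`, so along `D` it has at least its variation along `L`, which is within `δ` of that
of `f` once `η` is small. The part `min f η` agrees with `f` on `X`, and each of the at most `|L|`
points of `D` outside `X` costs it at most `η ^ p`. Hence the variation along `X` is at most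
`V - (V - 2δ) + |L| η ^ p < 3δ`.
-/

/-- The set of all Wiener `p`-variation sums of a real function `f` over partitions of `[a,b]`. -/
def varSumsR (p : ℝ) (f : ℝ → ℝ) (a b : ℝ) : Set ℝ :=
  {s | ∃ (m : ℕ) (t : ℕ → ℝ), 0 < m ∧ t 0 = a ∧ t m = b ∧
        (∀ j < m, t j < t (j + 1)) ∧
        s = ∑ j ∈ Finset.range m, |f (t (j + 1)) - f (t j)| ^ p}

open Set Filter Topology List

noncomputable def pVarSum {α : Type*} (p : ℝ) (f : α → ℝ) : List α → ℝ
  | a :: b :: l => |f b - f a| ^ p + pVarSum p f (b :: l)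
  | _ => 0

section General

variable {α : Type*} {p : ℝ} {f g h : α → ℝ}

@[simp] lemma pVarSum_nil : pVarSum p f [] = 0 := rfl

@[simp] lemma pVarSum_singleton (a : α) : pVarSum p f [a] = 0 := rfl

@[simp] lemma pVarSum_cons_cons (a b : α) (l : List α) :
    pVarSum p f (a :: b :: l) = |f b - f a| ^ p + pVarSum p f (b :: l) := rfl

lemma pVarSum_nonneg : ∀ l : List α, 0 ≤ pVarSum p f l
  | [] | [_] => le_rfl
  | _ :: b :: l => add_nonneg (by positivity) (pVarSum_nonneg (b :: l))

lemma pVarSum_le_pVarSum_cons (a : α) : ∀ l : List α, pVarSum p f l ≤ pVarSum p f (a :: l)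
  | [] => le_rfl
  | _ :: _ => le_add_of_nonneg_left (by positivity)

lemma pVarSum_congr : ∀ {l : List α}, (∀ x ∈ l, f x = g x) → pVarSum p f l = pVarSum p g l
  | [], _ | [_], _ => rfl
  | a :: b :: l, hfg => by
    rw [pVarSum_cons_cons, pVarSum_cons_cons, hfg a (by simp), hfg b (by simp),
      pVarSum_congr fun x hx => hfg x (mem_cons_of_mem a hx)]

lemma pVarSum_add_pVarSum_le (hp : 1 ≤ p)
    (hsplit : ∀ x y, |g x - g y| + |h x - h y| ≤ |f x - f y|) :
    ∀ l : List α, pVarSum p g l + pVarSum p h l ≤ pVarSum p f l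
  | [] | [_] => by simp
  | a :: b :: l => by
    have hab : |g b - g a| ^ p + |h b - h a| ^ p ≤ |f b - f a| ^ p :=
      (Real.add_rpow_le_rpow_add (abs_nonneg _) (abs_nonneg _) hp).trans
        (Real.rpow_le_rpow (by positivity) (hsplit b a) (by linarith))
    have := pVarSum_add_pVarSum_le hp hsplit (b :: l)
    simp only [pVarSum_cons_cons]
    linarith

lemma abs_sub_rpow_le_rpow_add_rpow (hp : 0 ≤ p) {a b : ℝ} (ha : 0 ≤ a) (hb : 0 ≤ b) :
    |b - a| ^ p ≤ a ^ p + b ^ p := by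
  rcases le_total a b with hab | hab
  · calc |b - a| ^ p ≤ b ^ p :=
          Real.rpow_le_rpow (abs_nonneg _) (abs_sub_le_iff.2 ⟨by linarith, by linarith⟩) hp
      _ ≤ a ^ p + b ^ p := le_add_of_nonneg_left (by positivity)
  · calc |b - a| ^ p ≤ a ^ p :=
          Real.rpow_le_rpow (abs_nonneg _) (abs_sub_le_iff.2 ⟨by linarith, by linarith⟩) hp
      _ ≤ a ^ p + b ^ p := le_add_of_nonneg_right (by positivity)

lemma pVarSum_le_of_sublist_of_eq_zero (hp : 0 ≤ p) {s t : List α} (hst : s <+ t)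
    (ht : t.Nodup) (hf : ∀ x ∈ t, 0 ≤ f x) (hzero : ∀ x ∈ t, x ∉ s → f x = 0) :
    pVarSum p f s ≤ pVarSum p f t := by
  -- Induct on the sublist relation, carrying along the same claim with a common first point.
  suffices H : pVarSum p f s ≤ pVarSum p f t ∧
      ∀ a, 0 ≤ f a → pVarSum p f (a :: s) ≤ pVarSum p f (a :: t) from H.1
  induction hst with
  | slnil => simp
  | @cons s t a hst ih =>
    obtain ⟨hat, ht⟩ := nodup_cons.1 ht
    have ha : f a = 0 := hzero a mem_cons_self fun has => hat (hst.subset has)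
    obtain ⟨-, ih⟩ := ih ht (fun x hx => hf x (mem_cons_of_mem a hx))
      (fun x hx => hzero x (mem_cons_of_mem a hx))
    refine ⟨(pVarSum_le_pVarSum_cons a s).trans (ih a ha.ge), fun b hb => ?_⟩
    have hskip : pVarSum p f (b :: s) ≤ |f a - f b| ^ p + pVarSum p f (a :: s) := by
      cases s with
      | nil => simp only [pVarSum_singleton]; positivity
      | cons c s =>
        have hc := hf c (mem_cons_of_mem a (hst.subset mem_cons_self))
        have := abs_sub_rpow_le_rpow_add_rpow hp hb hc
        simp only [pVarSum_cons_cons, ha, zero_sub, sub_zero, abs_neg, abs_of_nonneg hb,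
          abs_of_nonneg hc]
        linarith
    rw [pVarSum_cons_cons]
    linarith [ih a ha.ge]
  | @cons_cons s t a hst ih =>
    obtain ⟨hat, ht⟩ := nodup_cons.1 ht
    obtain ⟨-, ih⟩ := ih ht (fun x hx => hf x (mem_cons_of_mem a hx))
      fun x hx hxs => hzero x (mem_cons_of_mem a hx)
        fun h => (mem_cons.1 h).elim (fun hxa => hat (hxa ▸ hx)) hxs
    have hta := ih a (hf a mem_cons_self)
    exact ⟨hta, fun b _ => by simp only [pVarSum_cons_cons]; linarith⟩

lemma pVarSum_add_length_mul_le (hp : 0 ≤ p) {η : ℝ} {s t : List α} (hst : s <+ t)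
    (hf : ∀ x ∈ t, f x ∈ Icc 0 η) :
    pVarSum p f s + s.length * η ^ p ≤ pVarSum p f t + t.length * η ^ p := by
  suffices H : pVarSum p f s + s.length * η ^ p ≤ pVarSum p f t + t.length * η ^ p ∧
      ∀ a, f a ∈ Icc 0 η →
        pVarSum p f (a :: s) + s.length * η ^ p ≤ pVarSum p f (a :: t) + t.length * η ^ p
    from H.1
  induction hst with
  | slnil => simp
  | @cons s t a hst ih =>
    obtain ⟨-, ih⟩ := ih fun x hx => hf x (mem_cons_of_mem a hx)
    have ha := ih a (hf a mem_cons_self)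
    have hη : 0 ≤ η ^ p :=
      Real.rpow_nonneg ((hf a mem_cons_self).1.trans (hf a mem_cons_self).2) _
    have hskip : ∀ b, f b ∈ Icc 0 η → pVarSum p f (b :: s) ≤ η ^ p + pVarSum p f s := by
      intro b hb
      cases s with
      | nil => simpa using hη
      | cons c s =>
        have hc := hf c (mem_cons_of_mem a (hst.subset mem_cons_self))
        have : |f c - f b| ^ p ≤ η ^ p :=
          Real.rpow_le_rpow (abs_nonneg _)
            (abs_sub_le_iff.2 ⟨by linarith [hc.2, hb.1], by linarith [hc.1, hb.2]⟩) hp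
        rw [pVarSum_cons_cons]
        linarith
    have hcons := pVarSum_le_pVarSum_cons (p := p) (f := f) a s
    simp only [length_cons, Nat.cast_add, Nat.cast_one, pVarSum_cons_cons] at ha ⊢
    refine ⟨by linarith, fun b hb => ?_⟩
    linarith [hskip b hb, Real.rpow_nonneg (abs_nonneg (f a - f b)) p]
  | @cons_cons s t a hst ih =>
    obtain ⟨-, ih⟩ := ih fun x hx => hf x (mem_cons_of_mem a hx)
    have ha := ih a (hf a mem_cons_self)
    simp only [length_cons, Nat.cast_add, Nat.cast_one, pVarSum_cons_cons]
    exact ⟨by linarith, fun b _ => by linarith⟩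

lemma continuous_pVarSum {X : Type*} [TopologicalSpace X] (hp : 0 ≤ p) {F : X → α → ℝ}
    (hF : ∀ a, Continuous fun η => F η a) :
    ∀ l : List α, Continuous fun η => pVarSum p (F η) l
  | [] | [_] => continuous_const
  | a :: b :: l => by
    simp only [pVarSum_cons_cons]
    exact ((hF b).sub (hF a)).abs.rpow_const (fun _ => Or.inr hp) |>.add
      (continuous_pVarSum hp hF (b :: l))

lemma abs_min_sub_min_add_abs_sub_min_sub_sub_min (a b η : ℝ) :
    |min a η - min b η| + |(a - min a η) - (b - min b η)| = |a - b| := by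
  rcases le_total a b with hab | hab
  · rw [abs_sub_comm, abs_of_nonneg (sub_nonneg.2 (min_le_min_right η hab)), abs_sub_comm (a - _),
      abs_of_nonneg, abs_sub_comm, abs_of_nonneg (sub_nonneg.2 hab)] <;> grind
  · rw [abs_of_nonneg (sub_nonneg.2 (min_le_min_right η hab)), abs_of_nonneg,
      abs_of_nonneg (sub_nonneg.2 hab)] <;> grind

lemma exists_pos_pVarSum_sub_min_gt (hp : 0 < p) {l : List α} (hf : ∀ x ∈ l, 0 ≤ f x)
    {δ : ℝ} (hδ : 0 < δ) (C : ℝ) :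
    ∃ η > 0,
      pVarSum p f l - δ < pVarSum p (fun x => f x - min (f x) η) l ∧ C * η ^ p < δ := by
  have htrunc : Tendsto (fun η => pVarSum p (fun x => f x - min (f x) η) l) (𝓝[>] 0)
      (𝓝 (pVarSum p f l)) := by
    have := ((continuous_pVarSum hp.le (F := fun η x => f x - min (f x) η)
      fun x => by fun_prop) l).tendsto 0
    rw [pVarSum_congr fun x hx => by rw [min_eq_right (hf x hx), sub_zero]] at this
    exact this.mono_left nhdsWithin_le_nhds
  have hpow : Tendsto (fun η : ℝ => C * η ^ p) (𝓝[>] 0) (𝓝 0) := by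
    have : Tendsto (fun η : ℝ => C * η ^ p) (𝓝 0) (𝓝 (C * 0 ^ p)) :=
      (continuous_const.mul (Real.continuous_rpow_const hp.le)).tendsto 0
    simpa [Real.zero_rpow hp.ne'] using this.mono_left nhdsWithin_le_nhds
  obtain ⟨η, ⟨hl, hC⟩, hη⟩ := (((htrunc.eventually (lt_mem_nhds (sub_lt_self _ hδ))).and
    (hpow.eventually (gt_mem_nhds hδ))).and self_mem_nhdsWithin).exists
  exact ⟨η, hη, hl, hC⟩

lemma pVarSum_sub_min_add_pVarSum_le (hp : 1 ≤ p) {η : ℝ} (hη : 0 ≤ η) {L X D : List α}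
    (hL : L <+ D) (hX : X <+ D) (hD : D.Nodup) (hcover : ∀ x ∈ D, x ∈ L ∨ x ∈ X)
    (hlen : D.length ≤ L.length + X.length) (hf : ∀ x ∈ D, 0 ≤ f x)
    (hfX : ∀ x ∈ X, f x ≤ η) :
    pVarSum p (fun x => f x - min (f x) η) L + pVarSum p f X
      ≤ pVarSum p f D + L.length * η ^ p := by
  have hp0 : 0 ≤ p := zero_le_one.trans hp
  have hsplit := pVarSum_add_pVarSum_le (g := fun x => min (f x) η)
    (h := fun x => f x - min (f x) η) hp
    (fun x y => (abs_min_sub_min_add_abs_sub_min_sub_sub_min (f x) (f y) η).le) D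
  have htrunc : pVarSum p (fun x => f x - min (f x) η) L
      ≤ pVarSum p (fun x => f x - min (f x) η) D :=
    pVarSum_le_of_sublist_of_eq_zero hp0 hL hD (fun x _ => sub_nonneg.2 (min_le_left _ _))
      fun x hx hxL => by rw [min_eq_left (hfX x ((hcover x hx).resolve_left hxL)), sub_self]
  have hmin := pVarSum_add_length_mul_le hp0 hX (f := fun x => min (f x) η)
    fun x hx => ⟨le_min (hf x hx) hη, min_le_right _ _⟩
  rw [pVarSum_congr fun x hx => min_eq_left (hfX x hx)] at hmin
  have hcount : (D.length : ℝ) * η ^ p ≤ (L.length + X.length) * η ^ p :=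
    mul_le_mul_of_nonneg_right (by exact_mod_cast hlen) (by positivity)
  linarith

end General

section Chains

variable {α : Type*} [LinearOrder α] {x : ℕ → α} {n : ℕ}

lemma sortedLT_map_range_succ (hx : ∀ j < n, x j < x (j + 1)) :
    ((range (n + 1)).map x).SortedLT := by
  have hmono : StrictMonoOn x (Iic n) :=
    strictMonoOn_Iic_of_lt_succ fun j hj => by simpa using hx j hj
  refine (pairwise_map.2 (pairwise_lt_range.imp_of_mem fun hi hj hij => hmono ?_ ?_ hij)).sortedLT
  · exact Nat.lt_succ_iff.1 (mem_range.1 hi)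
  · exact Nat.lt_succ_iff.1 (mem_range.1 hj)

lemma mem_Icc_of_mem_map_range_succ (hx : ∀ j < n, x j < x (j + 1)) {y : α}
    (hy : y ∈ (range (n + 1)).map x) : y ∈ Icc (x 0) (x n) := by
  have hmono : MonotoneOn x (Iic n) :=
    (strictMonoOn_Iic_of_lt_succ fun j hj => by simpa using hx j hj).monotoneOn
  obtain ⟨j, hj, rfl⟩ := mem_map.1 hy
  have hjn : j ∈ Iic n := Nat.lt_succ_iff.1 (mem_range.1 hj)
  exact ⟨hmono n.zero_le hjn j.zero_le, hmono hjn (mem_Iic.2 le_rfl) hjn⟩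

lemma exists_sortedLT_merge {L X : List α} (hL : L.SortedLT) (hX : X.SortedLT) :
    ∃ D : List α, D.SortedLT ∧ L <+ D ∧ X <+ D ∧ (∀ x ∈ D, x ∈ L ∨ x ∈ X) ∧
      D.length ≤ L.length + X.length := by
  have hD := Finset.sortedLT_sort (L.toFinset ∪ X.toFinset)
  refine ⟨_, hD, ?_, ?_, fun x hx => by simpa using hx, ?_⟩
  · exact sublist_of_subperm_of_sortedLE (subperm_of_subset hL.nodup fun x hx => by simp [hx])
      hL.sortedLE hD.sortedLE
  · exact sublist_of_subperm_of_sortedLE (subperm_of_subset hX.nodup fun x hx => by simp [hx])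
      hX.sortedLE hD.sortedLE
  · rw [Finset.length_sort]
    exact (Finset.card_union_le _ _).trans (add_le_add (toFinset_card_le L) (toFinset_card_le X))

end Chains

lemma pVarSum_map_range_succ {α : Type*} (p : ℝ) (f : α → ℝ) :
    ∀ (n : ℕ) (x : ℕ → α),
      pVarSum p f ((range (n + 1)).map x) = ∑ j ∈ Finset.range n, |f (x (j + 1)) - f (x j)| ^ p
  | 0, x => by simp
  | n + 1, x => by
    have hshift : ∀ (k : ℕ) (y : ℕ → α),
        (range (k + 1)).map y = y 0 :: (range k).map fun j => y (j + 1) := by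
      intro k y
      rw [range_succ_eq_map, map_cons, List.map_map]
      rfl
    rw [hshift, hshift, pVarSum_cons_cons, ← hshift (y := fun j => x (j + 1)),
      pVarSum_map_range_succ p f n, Finset.sum_range_succ' _ n, add_comm]

section VarSums

variable {p a b : ℝ} {f : ℝ → ℝ}

lemma varSumsR_nonempty (hab : a < b) : (varSumsR p f a b).Nonempty :=
  ⟨_, 1, fun j => a + j * (b - a), one_pos, by simp, by simp,
    fun j _ => by push_cast; nlinarith, rfl⟩

lemma exists_sortedLT_of_mem_varSumsR {s : ℝ} (hs : s ∈ varSumsR p f a b) :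
    ∃ l : List ℝ, l.SortedLT ∧ a ∈ l ∧ b ∈ l ∧ (∀ y ∈ l, y ∈ Icc a b) ∧
      pVarSum p f l = s := by
  obtain ⟨m, t, -, rfl, rfl, ht, rfl⟩ := hs
  exact ⟨_, sortedLT_map_range_succ ht, mem_map_of_mem (by simp), mem_map_of_mem (by simp),
    fun y hy => mem_Icc_of_mem_map_range_succ ht hy, pVarSum_map_range_succ p f m t⟩

lemma pVarSum_mem_varSumsR {l : List ℝ} (hl : l.SortedLT) (hab : a < b) (ha : a ∈ l)
    (hb : b ∈ l) (hIcc : ∀ y ∈ l, y ∈ Icc a b) : pVarSum p f l ∈ varSumsR p f a b := by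
  obtain ⟨n, hn⟩ := Nat.exists_eq_add_one_of_ne_zero (length_pos_of_mem ha).ne'
  have hget : ∀ j (hj : j ≤ n), l.getD j a = l[j] := fun j hj => getD_eq_getElem _ _ (by omega)
  obtain ⟨i, hi, hia⟩ := getElem_of_mem ha
  obtain ⟨k, hk, hkb⟩ := getElem_of_mem hb
  have hfirst : l.getD 0 a = a := by
    rw [hget 0 n.zero_le, ← hia]
    exact le_antisymm (hl.getElem_le_getElem_iff.2 i.zero_le) (hia ▸ (hIcc _ (getElem_mem _)).1)
  have hlast : l.getD n a = b := by
    rw [hget n le_rfl, ← hkb]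
    exact le_antisymm (hkb ▸ (hIcc _ (getElem_mem _)).2) (hl.getElem_le_getElem_iff.2 (by omega))
  have hpos : 0 < n := Nat.pos_of_ne_zero fun h => hab.ne (by rw [← hfirst, ← hlast, h])
  refine ⟨n, fun j => l.getD j a, hpos, hfirst, hlast, fun j hj => ?_, ?_⟩
  · show l.getD j a < l.getD (j + 1) a
    rw [hget j hj.le, hget (j + 1) hj]
    exact hl.getElem_lt_getElem_iff.2 (lt_add_one j)
  · rw [← pVarSum_map_range_succ p f n (fun j => l.getD j a)]
    congr
    refine (ext_getElem (by simp [hn]) fun j h₁ _ => ?_).symm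
    simp only [getElem_map, getElem_range]
    exact hget j (by simp only [length_map, length_range] at h₁; omega)

end VarSums

theorem stmt7 (p : ℝ) (hp : 1 ≤ p) (f : ℝ → ℝ)
    (hrange : ∀ x ∈ Set.Icc (0:ℝ) 1, f x ∈ Set.Icc (0:ℝ) 1)
    (hf : BddAbove (varSumsR p f 0 1)) :
    ∀ ε > 0, ∃ η > 0, ∀ (m : ℕ) (x : ℕ → ℝ), 0 < m →
      (0 ≤ x 0) → (x (m - 1) ≤ 1) → (∀ j, j + 1 < m → x j < x (j + 1)) →
      (∀ j < m, f (x j) < η) →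
      (∑ j ∈ Finset.range (m - 1), |f (x (j + 1)) - f (x j)| ^ p) ^ (1 / p) < ε := by
  intro ε hε
  have hp0 : 0 < p := by linarith
  have hδ : 0 < ε ^ p / 3 := by positivity
  obtain ⟨_, hs, hLsup⟩ :=
    exists_lt_of_lt_csSup (varSumsR_nonempty (p := p) (f := f) one_pos) (sub_lt_self _ hδ)
  obtain ⟨L, hL, hL0, hL1, hLIcc, rfl⟩ := exists_sortedLT_of_mem_varSumsR hs
  obtain ⟨η, hη, hLη, hηpow⟩ := exists_pos_pVarSum_sub_min_gt hp0
    (fun y hy => (hrange y (hLIcc y hy)).1) hδ L.length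
  refine ⟨η, hη, fun m x hm hx0 hx1 hx hfx => ?_⟩
  obtain ⟨n, rfl⟩ := Nat.exists_eq_add_one_of_ne_zero hm.ne'
  have hxn : ∀ j < n, x j < x (j + 1) := fun j hj => hx j (by omega)
  rw [Nat.add_sub_cancel] at hx1 ⊢
  rw [← pVarSum_map_range_succ]
  set X := (range (n + 1)).map x
  have hXIcc : ∀ y ∈ X, y ∈ Icc 0 1 := fun y hy =>
    have hy' := mem_Icc_of_mem_map_range_succ hxn hy
    ⟨hx0.trans hy'.1, hy'.2.trans hx1⟩
  have hfX : ∀ y ∈ X, f y ≤ η := forall_mem_map.2 fun j hj => (hfx j (mem_range.1 hj)).le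
  obtain ⟨D, hD, hLD, hXD, hcover, hlen⟩ :=
    exists_sortedLT_merge hL (sortedLT_map_range_succ hxn)
  have hDIcc : ∀ y ∈ D, y ∈ Icc 0 1 := fun y hy => (hcover y hy).elim (hLIcc y) (hXIcc y)
  have hDsup : pVarSum p f D ≤ sSup (varSumsR p f 0 1) :=
    le_csSup hf (pVarSum_mem_varSumsR hD one_pos (hLD.subset hL0) (hLD.subset hL1) hDIcc)
  have hsplit := pVarSum_sub_min_add_pVarSum_le hp hη.le hLD hXD hD.nodup hcover hlen
    (fun y hy => (hrange y (hDIcc y hy)).1) hfX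
  have hXε : pVarSum p f X < ε ^ p := by linarith
  calc pVarSum p f X ^ (1 / p) < (ε ^ p) ^ (1 / p) :=
        Real.rpow_lt_rpow (pVarSum_nonneg X) hXε (by positivity)
    _ = ε := by rw [← Real.rpow_mul hε.le, mul_one_div_cancel hp0.ne', Real.rpow_one]
end

section
/- Let 1 ≤ p < ∞ and let f : [0,1] → ℂ have finite total Wiener p-variation. For every ε > 0 there exists δ > 0 such that for any finite sequence 0 ≤ x₁ < x₂ < ⋯ < x_m ≤ 1 with |f(x_j)| < δ for all j, one has (Σ_{j=1}^{m−1} |f(x_{j+1}) − f(x_j)|^p)^{1/p} < ε. -/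
open Finset in
/-- The set of all Wiener `p`-variation sums of `f` over partitions of `[a,b]`. -/
def varSums (p : ℝ) (f : ℝ → ℂ) (a b : ℝ) : Set ℝ :=
  {s | ∃ (m : ℕ) (t : ℕ → ℝ), 0 < m ∧ t 0 = a ∧ t m = b ∧
        (∀ j < m, t j < t (j + 1)) ∧
        s = ∑ j ∈ Finset.range m, ‖f (t (j + 1)) - f (t j)‖ ^ p}

/-- The total Wiener `p`-variation of `f` on `[a,b]`. -/
noncomputable def pVar (p : ℝ) (f : ℝ → ℂ) (a b : ℝ) : ℝ := sSup (varSums p f a b)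

/-- The supremum norm of `f` on `[0,1]`. -/
noncomputable def supNorm (f : ℝ → ℂ) : ℝ :=
  sSup ((fun x => ‖f x‖) '' Set.Icc (0:ℝ) 1)

/-- The infimum of `|f|` on `[0,1]`. -/
noncomputable def infAbs (f : ℝ → ℂ) : ℝ :=
  sInf ((fun x => ‖f x‖) '' Set.Icc (0:ℝ) 1)

/-- The `BV_p` norm of `f` on `[0,1]`. -/
noncomputable def bvNorm (p : ℝ) (f : ℝ → ℂ) : ℝ :=
  supNorm f + (pVar p f 0 1) ^ (1 / p)

/-!
Suppose the claim fails for some `ε`: for every `δ > 0` some increasing sample of `[0,1]` on which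
`|f| < δ` has `p`-variation sum at least `c = ε ^ p`. Merging such a sample into a finite set `A`
does not simply add the two sums when `p > 1`, because a step `a → a'` of `A`, of size up to
`(|f a| + |f a'|) ^ p`, gets replaced by steps `a → y → ⋯ → y' → a'` whose end steps only see
`|f a| ^ p` and `|f a'| ^ p`. Instead one tracks the potential
`Σ max (|f b - f a| / 2, ||f a| - |f b||) ^ p` over consecutive points: it lies between `2 ^ (-p)`
times the `p`-variation sum and that sum, a single step contributes at most
`max (|f a|, |f a'|) ^ p`, and the two new end steps recover this up to `O(δ)`. Merging a sample
with `δ` small compared to the size of `A` therefore raises the potential by about `c / 2 ^ p`, and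
iterating gives increasing samples of `[0,1]` with unbounded `p`-variation sums.
-/

theorem List.exists_destutter'_eq_cons {α : Type*} (R : α → α → Prop) [DecidableRel R] :
    ∀ (a : α) (l : List α), ∃ t, l.destutter' R a = a :: t
  | a, [] => ⟨[], rfl⟩
  | a, b :: l => by
    by_cases h : R a b
    · exact ⟨_, List.destutter'_cons_pos l h⟩
    · rw [List.destutter'_cons_neg l h]
      exact List.exists_destutter'_eq_cons R a l

theorem List.getLast?_destutter'_ne {α : Type*} [DecidableEq α] :
    ∀ (a : α) (l : List α), (l.destutter' (· ≠ ·) a).getLast? = (a :: l).getLast?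
  | a, [] => rfl
  | a, b :: l => by
    by_cases h : a = b
    · subst h
      rw [List.destutter'_cons_neg l (not_not.mpr rfl), List.getLast?_destutter'_ne a l]
      simp [List.getLast?_cons]
    · rw [List.destutter'_cons_pos l h, List.getLast?_cons, List.getLast?_destutter'_ne b l]
      simp [List.getLast?_cons]

def chainSum {α : Type*} (g : α → α → ℝ) : List α → ℝ
  | a :: b :: l => g a b + chainSum g (b :: l)
  | _ => 0

section ChainSum

variable {α : Type*} (g : α → α → ℝ)

@[simp] theorem chainSum_nil : chainSum g [] = 0 := rfl

@[simp] theorem chainSum_singleton (a : α) : chainSum g [a] = 0 := rfl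

@[simp] theorem chainSum_cons_cons (a b : α) (l : List α) :
    chainSum g (a :: b :: l) = g a b + chainSum g (b :: l) := rfl

theorem chainSum_const_mul (c : ℝ) :
    ∀ l : List α, chainSum (fun a b => c * g a b) l = c * chainSum g l
  | [] | [_] => by simp
  | a :: b :: l => by simp [chainSum_const_mul c (b :: l), mul_add]

variable {g}

theorem chainSum_mono {g' : α → α → ℝ} (h : ∀ a b, g a b ≤ g' a b) :
    ∀ l : List α, chainSum g l ≤ chainSum g' l
  | [] | [_] => le_rfl
  | a :: b :: l => by simpa using add_le_add (h a b) (chainSum_mono h (b :: l))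

theorem chainSum_le_cons (hg : ∀ a b, 0 ≤ g a b) (a : α) :
    ∀ l : List α, chainSum g l ≤ chainSum g (a :: l)
  | [] => le_rfl
  | b :: l => by simpa using hg a b

theorem chainSum_le_append_singleton (hg : ∀ a b, 0 ≤ g a b) (b : α) :
    ∀ l : List α, chainSum g l ≤ chainSum g (l ++ [b])
  | [] => le_rfl
  | [a] => by simpa using hg a b
  | a :: a' :: l => by simpa using chainSum_le_append_singleton hg b (a' :: l)

theorem chainSum_destutter' [DecidableEq α] (hg : ∀ a, g a a = 0) :
    ∀ (a : α) (l : List α), chainSum g (l.destutter' (· ≠ ·) a) = chainSum g (a :: l)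
  | a, [] => rfl
  | a, b :: l => by
    by_cases hab : a = b
    · subst hab
      simp [chainSum_destutter' hg a l, hg]
    · obtain ⟨t, ht⟩ := List.exists_destutter'_eq_cons (· ≠ ·) b l
      rw [List.destutter'_cons_pos _ hab, ht, chainSum_cons_cons, ← ht,
        chainSum_destutter' hg b l, chainSum_cons_cons]

theorem chainSum_map_range (t : ℕ → α) (m : ℕ) :
    chainSum g ((List.range (m + 1)).map t) = ∑ j ∈ Finset.range m, g (t j) (t (j + 1)) := by
  induction m generalizing t with
  | zero => simp
  | succ m ih =>
    rw [List.range_succ_eq_map, List.map_cons, List.map_map, Finset.sum_range_succ',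
      ← ih fun j => t (j + 1)]
    simp [List.range_succ_eq_map, add_comm, Function.comp_def]

end ChainSum

noncomputable def varTerm (p : ℝ) (f : ℝ → ℂ) (a b : ℝ) : ℝ := ‖f b - f a‖ ^ p

section Partitions

variable {p : ℝ} {f : ℝ → ℂ}

theorem varTerm_nonneg (a b : ℝ) : 0 ≤ varTerm p f a b := by unfold varTerm; positivity

theorem varTerm_self (hp : p ≠ 0) (a : ℝ) : varTerm p f a a = 0 := by
  simp [varTerm, Real.zero_rpow hp]

theorem varTerm_mem_varSums {a b : ℝ} (hab : a < b) : varTerm p f a b ∈ varSums p f a b :=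
  ⟨1, fun j => if j = 0 then a else b, one_pos, rfl, rfl, by simpa using hab,
    by simp [varTerm]⟩

theorem varTerm_add_mem_varSums {a c b s : ℝ} (hac : a < c) (hs : s ∈ varSums p f c b) :
    varTerm p f a c + s ∈ varSums p f a b := by
  obtain ⟨m, t, -, ht0, htm, hlt, rfl⟩ := hs
  refine ⟨m + 1, fun j => if j = 0 then a else t (j - 1), m.succ_pos, rfl, by simpa using htm,
    fun j hj => ?_, ?_⟩
  · rcases j with _ | j
    · simpa [ht0] using hac
    · simpa using hlt j (by omega)
  · rw [Finset.sum_range_succ']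
    simp [varTerm, ht0, add_comm]

theorem chainSum_mem_varSums :
    ∀ (a : ℝ) (l : List ℝ) (b : ℝ), (a :: l).IsChain (· < ·) → l.getLast? = some b →
      chainSum (varTerm p f) (a :: l) ∈ varSums p f a b
  | _, [], _, _, hb => by simp at hb
  | a, [c], b, hl, hb => by
    obtain rfl : c = b := by simpa using hb
    simpa using varTerm_mem_varSums (List.rel_of_isChain_cons_cons hl)
  | a, c :: d :: l, b, hl, hb => by
    rw [List.isChain_cons_cons] at hl
    rw [chainSum_cons_cons]
    exact varTerm_add_mem_varSums hl.1
      (chainSum_mem_varSums c (d :: l) b hl.2 (by simpa [List.getLast?_cons] using hb))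

theorem chainSum_varTerm_le (hp : p ≠ 0) {V : ℝ} (hV : V ∈ upperBounds (varSums p f 0 1))
    {L : List ℝ} (hL : L.Pairwise (· ≤ ·)) (hL01 : ∀ x ∈ L, x ∈ Set.Icc (0 : ℝ) 1) :
    chainSum (varTerm p f) L ≤ V := by
  have hsorted : (0 :: (L ++ [1])).Pairwise (· ≤ ·) := by
    simp only [List.pairwise_cons, List.pairwise_append, List.mem_append, List.mem_singleton]
    grind
  obtain ⟨t, ht⟩ := List.exists_destutter'_eq_cons (· ≠ ·) (0 : ℝ) (L ++ [1])
  have hchain : (0 :: t).IsChain (· < ·) := by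
    have hle : (0 :: t).Pairwise (· ≤ ·) :=
      ht ▸ hsorted.sublist (List.destutter'_sublist _ _ _)
    have hne : (0 :: t).IsChain (· ≠ ·) := ht ▸ List.isChain_destutter' _ _ _
    exact List.isChain_iff_getElem.mpr fun i hi =>
      (hle.isChain.getElem i hi).lt_of_ne (hne.getElem i hi)
  have hlast : t.getLast? = some 1 := by
    have := List.getLast?_destutter'_ne (0 : ℝ) (L ++ [1])
    rw [ht] at this
    cases t with
    | nil => simp [List.getLast?_cons] at this
    | cons c t => simpa [List.getLast?_cons] using this
  calc chainSum (varTerm p f) L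
      ≤ chainSum (varTerm p f) (0 :: (L ++ [1])) :=
        (chainSum_le_append_singleton varTerm_nonneg 1 L).trans
          (chainSum_le_cons varTerm_nonneg 0 _)
    _ = chainSum (varTerm p f) (0 :: t) := by rw [← ht, chainSum_destutter' (varTerm_self hp)]
    _ ≤ V := hV (chainSum_mem_varSums 0 t 1 hchain hlast)

end Partitions

noncomputable def potentialTerm (p : ℝ) (f : ℝ → ℂ) (a b : ℝ) : ℝ :=
  (max (‖f b - f a‖ / 2) |‖f a‖ - ‖f b‖|) ^ p

noncomputable def overshoot (p d : ℝ) (f : ℝ → ℂ) (z : ℝ) : ℝ :=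
  (max (‖f z‖ - d) 0) ^ p

theorem rpow_le_max_sub_rpow_add {p M d : ℝ} (hp : 1 ≤ p) (hM : M ∈ Set.Icc (0 : ℝ) 1)
    (hd : 0 ≤ d) : M ^ p ≤ (max (M - d) 0) ^ p + p * d := by
  have hmax : 0 ≤ (max (M - d) 0) ^ p := by positivity
  rcases le_or_gt M d with hMd | hdM
  · nlinarith [Real.rpow_le_self_of_le_one hM.1 hM.2 hp]
  have hM0 : 0 < M := hd.trans_lt hdM
  have hbern := one_add_mul_self_le_rpow_one_add (s := -(d / M))
    (by linarith [div_le_one_of_le₀ hdM.le hM0.le]) hp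
  have hsplit : (1 + -(d / M)) ^ p = (M - d) ^ p / M ^ p := by
    rw [← Real.div_rpow (by linarith) hM0.le]
    congr 1
    field_simp
    ring
  have hMp : M ^ p / M ≤ 1 := by
    rw [← Real.rpow_sub_one hM0.ne']
    exact Real.rpow_le_one hM0.le hM.2 (by linarith)
  rw [hsplit, le_div_iff₀ (by positivity)] at hbern
  rw [max_eq_left (by linarith)]
  have : p * d * (M ^ p / M) ≤ p * d := mul_le_of_le_one_right (by positivity) hMp
  have hexpand : (1 + p * -(d / M)) * M ^ p = M ^ p - p * d * (M ^ p / M) := by ring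
  linarith

section Potential

variable {p d : ℝ} {f : ℝ → ℂ}

theorem potentialTerm_nonneg (a b : ℝ) : 0 ≤ potentialTerm p f a b := by
  unfold potentialTerm; positivity

theorem potentialTerm_comm (a b : ℝ) : potentialTerm p f a b = potentialTerm p f b a := by
  rw [potentialTerm, potentialTerm, norm_sub_rev, abs_sub_comm]

theorem potentialTerm_le_varTerm (hp : 0 ≤ p) (a b : ℝ) :
    potentialTerm p f a b ≤ varTerm p f a b := by
  refine Real.rpow_le_rpow (by positivity) (max_le (by linarith [norm_nonneg (f b - f a)]) ?_) hp
  rw [norm_sub_rev]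
  exact abs_norm_sub_norm_le _ _

theorem varTerm_div_le_potentialTerm (hp : 0 ≤ p) (a b : ℝ) :
    varTerm p f a b / 2 ^ p ≤ potentialTerm p f a b := by
  rw [varTerm, ← Real.div_rpow (norm_nonneg _) zero_le_two]
  exact Real.rpow_le_rpow (by positivity) (le_max_left _ _) hp

theorem varTerm_div_le_rpow (hp : 0 ≤ p) {a b : ℝ} (ha : ‖f a‖ ≤ d)
    (hb : ‖f b‖ ≤ d) :
    varTerm p f a b / 2 ^ p ≤ d ^ p := by
  rw [varTerm, ← Real.div_rpow (norm_nonneg _) zero_le_two]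
  exact Real.rpow_le_rpow (by positivity) (by linarith [norm_sub_le (f b) (f a)]) hp

theorem overshoot_nonneg (z : ℝ) : 0 ≤ overshoot p d f z := by unfold overshoot; positivity

theorem overshoot_le_potentialTerm (hp : 0 ≤ p) (a : ℝ) {b : ℝ} (hb : ‖f b‖ ≤ d) :
    overshoot p d f a ≤ potentialTerm p f a b := by
  have : ‖f a‖ - d ≤ max (‖f b - f a‖ / 2) |‖f a‖ - ‖f b‖| := by
    linarith [le_abs_self (‖f a‖ - ‖f b‖),
      le_max_right (‖f b - f a‖ / 2) |‖f a‖ - ‖f b‖|]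
  exact Real.rpow_le_rpow (le_max_right _ _) (max_le this (by positivity)) hp

theorem potentialTerm_le_overshoot_add (hp : 1 ≤ p) (hd : 0 ≤ d) {a b : ℝ}
    (ha : ‖f a‖ ≤ 1) (hb : ‖f b‖ ≤ 1) :
    potentialTerm p f a b ≤ overshoot p d f a + overshoot p d f b + p * d := by
  wlog hab : ‖f a‖ ≤ ‖f b‖ generalizing a b
  · rw [potentialTerm_comm]
    linarith [this hb ha (le_of_not_ge hab)]
  have hstep : max (‖f b - f a‖ / 2) |‖f a‖ - ‖f b‖| ≤ ‖f b‖ :=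
    max_le (by linarith [norm_sub_le (f b) (f a)])
      (abs_sub_le_iff.mpr ⟨by linarith [norm_nonneg (f b)], by linarith [norm_nonneg (f a)]⟩)
  calc potentialTerm p f a b
      ≤ ‖f b‖ ^ p := Real.rpow_le_rpow (by positivity) hstep (by linarith)
    _ ≤ overshoot p d f b + p * d := rpow_le_max_sub_rpow_add hp ⟨norm_nonneg _, hb⟩ hd
    _ ≤ overshoot p d f a + overshoot p d f b + p * d := by
      linarith [overshoot_nonneg (p := p) (f := f) (d := d) a]

theorem chainSum_varTerm_div_le (hp : 0 ≤ p) (l : List ℝ) :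
    chainSum (varTerm p f) l / 2 ^ p ≤ chainSum (potentialTerm p f) l := by
  rw [div_eq_inv_mul, ← chainSum_const_mul]
  refine chainSum_mono (fun a b => ?_) l
  rw [← div_eq_inv_mul]
  exact varTerm_div_le_potentialTerm hp a b

end Potential

section Merge

variable {p d : ℝ} {f : ℝ → ℂ}

/-- When new points precede the first old point `z`, the merge gains the potential of the step
into `z`, but breaks one step of the new list there. -/
noncomputable def mergeCredit (p d : ℝ) (f : ℝ → ℂ) : List ℝ → List ℝ → ℝ
  | z :: _, y :: _ => if z ≤ y then 0 else overshoot p d f z - d ^ p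
  | _, _ => 0

theorem neg_rpow_le_mergeCredit (hd : 0 ≤ d) :
    ∀ X Y : List ℝ, -d ^ p ≤ mergeCredit p d f X Y
  | z :: _, _ :: _ => by
    simp only [mergeCredit]
    split_ifs <;> linarith [Real.rpow_nonneg hd p, overshoot_nonneg (p := p) (d := d) (f := f) z]
  | [], _ | _ :: _, [] => by simp [mergeCredit]; positivity

theorem chainSum_potentialTerm_merge_cons_cons_of_le (hp : 1 ≤ p) (hd : 0 ≤ d) {z y : ℝ}
    {X Y : List ℝ} (hzy : z ≤ y) (hX : ∀ x ∈ z :: X, ‖f x‖ ≤ 1) (hy : ‖f y‖ ≤ d)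
    (ih : chainSum (potentialTerm p f) X + chainSum (varTerm p f) (y :: Y) / 2 ^ p
        + mergeCredit p d f X (y :: Y)
      ≤ chainSum (potentialTerm p f) (X.merge (y :: Y)) + X.length * (p * d + d ^ p)) :
    chainSum (potentialTerm p f) (z :: X) + chainSum (varTerm p f) (y :: Y) / 2 ^ p
        + mergeCredit p d f (z :: X) (y :: Y)
      ≤ chainSum (potentialTerm p f) ((z :: X).merge (y :: Y))
        + (z :: X).length * (p * d + d ^ p) := by
  have hC : 0 ≤ p * d + d ^ p := by positivity
  rw [List.cons_merge_cons_pos _ _ _ (decide_eq_true hzy)]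
  cases X with
  | nil =>
    have := potentialTerm_nonneg (p := p) (f := f) z y
    simp only [List.nil_merge, mergeCredit, chainSum_nil, chainSum_singleton, chainSum_cons_cons,
      List.length_nil, List.length_singleton, if_pos hzy] at ih ⊢
    push_cast at ih ⊢
    linarith
  | cons z' X =>
    have hgap := potentialTerm_le_overshoot_add (f := f) hp hd (hX z (by simp)) (hX z' (by simp))
    by_cases hz'y : z' ≤ y
    · rw [List.cons_merge_cons_pos _ _ _ (decide_eq_true hz'y)] at ih ⊢
      simp only [mergeCredit, if_pos hzy, if_pos hz'y, chainSum_cons_cons, List.length_cons,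
        Nat.cast_succ] at ih ⊢
      linarith
    · rw [List.cons_merge_cons_neg _ _ _ (by simpa using hz'y)] at ih ⊢
      have := overshoot_le_potentialTerm (by linarith : (0 : ℝ) ≤ p) z hy
      simp only [mergeCredit, if_pos hzy, if_neg hz'y, chainSum_cons_cons, List.length_cons,
        Nat.cast_succ] at ih ⊢
      linarith

theorem chainSum_potentialTerm_merge_cons_cons_of_not_le (hp : 0 ≤ p) (hd : 0 ≤ d) {z y : ℝ}
    {X Y : List ℝ} (hzy : ¬z ≤ y) (hY : ∀ y' ∈ y :: Y, ‖f y'‖ ≤ d)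
    (ih : chainSum (potentialTerm p f) (z :: X) + chainSum (varTerm p f) Y / 2 ^ p
        + mergeCredit p d f (z :: X) Y
      ≤ chainSum (potentialTerm p f) ((z :: X).merge Y) + (z :: X).length * (p * d + d ^ p)) :
    chainSum (potentialTerm p f) (z :: X) + chainSum (varTerm p f) (y :: Y) / 2 ^ p
        + mergeCredit p d f (z :: X) (y :: Y)
      ≤ chainSum (potentialTerm p f) ((z :: X).merge (y :: Y))
        + (z :: X).length * (p * d + d ^ p) := by
  rw [List.cons_merge_cons_neg _ _ _ (by simpa using hzy)]
  have hy : ‖f y‖ ≤ d := hY y (by simp)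
  have hinto := overshoot_le_potentialTerm hp z hy
  rw [potentialTerm_comm] at hinto
  have hdp : 0 ≤ d ^ p := by positivity
  cases Y with
  | nil =>
    have : 0 ≤ ((X.length : ℝ) + 1) * (p * d + d ^ p) := by positivity
    simp only [mergeCredit, if_neg hzy, List.merge_right, chainSum_cons_cons, chainSum_singleton,
      zero_div, add_zero, List.length_cons, Nat.cast_succ]
    linarith
  | cons y' Y =>
    have hstep := varTerm_div_le_rpow hp hy (hY y' (by simp))
    by_cases hzy' : z ≤ y'
    · rw [List.cons_merge_cons_pos _ _ _ (decide_eq_true hzy')] at ih ⊢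
      simp only [mergeCredit, if_neg hzy, if_pos hzy', chainSum_cons_cons, List.length_cons,
        Nat.cast_succ, add_div] at ih ⊢
      linarith
    · rw [List.cons_merge_cons_neg _ _ _ (by simpa using hzy')] at ih ⊢
      have := varTerm_div_le_potentialTerm (f := f) hp y y'
      simp only [mergeCredit, if_neg hzy, if_neg hzy', chainSum_cons_cons, List.length_cons,
        Nat.cast_succ, add_div] at ih ⊢
      linarith

theorem chainSum_potentialTerm_merge (hp : 1 ≤ p) (hd : 0 ≤ d) :
    ∀ (X Y : List ℝ), (∀ x ∈ X, ‖f x‖ ≤ 1) → (∀ y ∈ Y, ‖f y‖ ≤ d) →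
      chainSum (potentialTerm p f) X + chainSum (varTerm p f) Y / 2 ^ p + mergeCredit p d f X Y
        ≤ chainSum (potentialTerm p f) (X.merge Y) + X.length * (p * d + d ^ p)
  | [], Y, _, _ => by
    simpa [mergeCredit] using chainSum_varTerm_div_le (by linarith) Y
  | z :: X, [], _, _ => by
    simp [mergeCredit]
    positivity
  | z :: X, y :: Y, hX, hY => by
    by_cases hzy : z ≤ y
    · exact chainSum_potentialTerm_merge_cons_cons_of_le hp hd hzy hX (hY y (by simp))
        (chainSum_potentialTerm_merge hp hd X (y :: Y) (fun x hx => hX x (by simp [hx])) hY)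
    · exact chainSum_potentialTerm_merge_cons_cons_of_not_le (by linarith) hd hzy hY
        (chainSum_potentialTerm_merge hp hd (z :: X) Y hX (fun y' hy' => hY y' (by simp [hy'])))

end Merge

def IsSampleBelow (f : ℝ → ℂ) (r : ℝ) (L : List ℝ) : Prop :=
  L.Pairwise (· ≤ ·) ∧ ∀ x ∈ L, x ∈ Set.Icc (0 : ℝ) 1 ∧ ‖f x‖ ≤ r

section Iteration

open Filter Topology

variable {p : ℝ} {f : ℝ → ℂ}

theorem exists_mem_Ioc_mul_add_rpow_le {g : ℝ} (hp : 0 < p) (hg : 0 < g) (N : ℝ) :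
    ∃ d ∈ Set.Ioc (0 : ℝ) 1, N * (p * d + d ^ p) ≤ g := by
  have hcont : Continuous (fun d : ℝ => N * (p * d + d ^ p)) :=
    continuous_const.mul ((continuous_const.mul continuous_id).add
      (Real.continuous_rpow_const hp.le))
  have hlim : Tendsto (fun d : ℝ => N * (p * d + d ^ p)) (𝓝[>] 0) (𝓝 0) := by
    simpa [Real.zero_rpow hp.ne'] using hcont.continuousWithinAt.tendsto (x := 0) (s := Set.Ioi 0)
  exact (Filter.Eventually.and (Ioc_mem_nhdsGT zero_lt_one)
    (hlim.eventually (ge_mem_nhds hg))).exists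

theorem exists_chainSum_potentialTerm_ge (hp : 1 ≤ p) {c : ℝ} (hc : 0 < c)
    (H : ∀ δ > 0, ∃ S, IsSampleBelow f δ S ∧ c ≤ chainSum (varTerm p f) S)
    {A : List ℝ} (hA : IsSampleBelow f 1 A) :
    ∃ A', IsSampleBelow f 1 A' ∧
      chainSum (potentialTerm p f) A + c / 2 ^ p / 2 ≤ chainSum (potentialTerm p f) A' := by
  have hp0 : 0 < p := by linarith
  obtain ⟨d, ⟨hd0, hd1⟩, hd⟩ :=
    exists_mem_Ioc_mul_add_rpow_le hp0 (by positivity : 0 < c / 2 ^ p / 2) (A.length + 1)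
  obtain ⟨S, hS, hcS⟩ := H d hd0
  refine ⟨A.merge S, ⟨hA.1.merge hS.1, fun x hx => ?_⟩, ?_⟩
  · rcases List.mem_merge.mp hx with hx | hx
    · exact hA.2 x hx
    · exact ⟨(hS.2 x hx).1, (hS.2 x hx).2.trans hd1⟩
  · have hmerge := chainSum_potentialTerm_merge hp hd0.le A S (fun x hx => (hA.2 x hx).2)
      (fun y hy => (hS.2 y hy).2)
    have := neg_rpow_le_mergeCredit (p := p) (f := f) hd0.le A S
    have := div_le_div_of_nonneg_right hcS (by positivity : (0 : ℝ) ≤ 2 ^ p)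
    have : 0 ≤ p * d := by positivity
    linarith

theorem exists_pos_forall_chainSum_varTerm_lt (hp : 1 ≤ p) (hf : BddAbove (varSums p f 0 1))
    {c : ℝ} (hc : 0 < c) :
    ∃ δ > 0, ∀ S, IsSampleBelow f δ S → chainSum (varTerm p f) S < c := by
  by_contra! H
  obtain ⟨V, hV⟩ := hf
  have hp0 : 0 < p := by linarith
  have hg : 0 < c / 2 ^ p / 2 := by positivity
  have hgrow : ∀ k : ℕ, ∃ A, IsSampleBelow f 1 A ∧
      k * (c / 2 ^ p / 2) ≤ chainSum (potentialTerm p f) A := by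
    intro k
    induction k with
    | zero => exact ⟨[], ⟨List.Pairwise.nil, by simp⟩, by simp⟩
    | succ k ih =>
      obtain ⟨A, hA, hk⟩ := ih
      obtain ⟨A', hA', hA'k⟩ := exists_chainSum_potentialTerm_ge hp hc H hA
      exact ⟨A', hA', by push_cast; linarith⟩
  obtain ⟨k, hk⟩ := exists_nat_gt (V / (c / 2 ^ p / 2))
  obtain ⟨A, hA, hkA⟩ := hgrow k
  have := (chainSum_mono (potentialTerm_le_varTerm hp0.le) A).trans
    (chainSum_varTerm_le hp0.ne' hV hA.1 fun x hx => (hA.2 x hx).1)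
  rw [div_lt_iff₀ hg] at hk
  linarith

theorem isSampleBelow_map_range {r : ℝ} {n : ℕ} {x : ℕ → ℝ} (hx0 : 0 ≤ x 0)
    (hxn : x n ≤ 1) (hmono : ∀ j < n, x j < x (j + 1))
    (hr : ∀ j < n + 1, ‖f (x j)‖ ≤ r) :
    IsSampleBelow f r ((List.range (n + 1)).map x) := by
  have hx : MonotoneOn x (Set.Iic n) := (strictMonoOn_Iic_of_lt_succ hmono).monotoneOn
  refine ⟨List.pairwise_map.mpr (List.pairwise_le_range.imp_of_mem fun hi hj hij => ?_), ?_⟩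
  · exact hx (by simpa [Nat.lt_succ_iff] using hi) (by simpa [Nat.lt_succ_iff] using hj) hij
  · simp only [List.mem_map, List.mem_range, forall_exists_index, and_imp]
    rintro _ j hj rfl
    have hj' : j ∈ Set.Iic n := Nat.lt_succ_iff.mp hj
    exact ⟨⟨hx0.trans (hx (Nat.zero_le n) hj' (Nat.zero_le j)),
      (hx hj' Set.self_mem_Iic hj').trans hxn⟩, hr j hj⟩

end Iteration

theorem stmt8 (p : ℝ) (hp : 1 ≤ p) (f : ℝ → ℂ)
    (hf : BddAbove (varSums p f 0 1)) :
    ∀ ε > 0, ∃ δ > 0, ∀ (m : ℕ) (x : ℕ → ℝ), 0 < m →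
      (0 ≤ x 0) → (x (m - 1) ≤ 1) → (∀ j, j + 1 < m → x j < x (j + 1)) →
      (∀ j < m, ‖f (x j)‖ < δ) →
      (∑ j ∈ Finset.range (m - 1), ‖f (x (j + 1)) - f (x j)‖ ^ p) ^ (1 / p) < ε := by
  intro ε hε
  have hp0 : 0 < p := by linarith
  obtain ⟨δ, hδ, hsmall⟩ :=
    exists_pos_forall_chainSum_varTerm_lt hp hf (Real.rpow_pos_of_pos hε p)
  refine ⟨δ, hδ, fun m x hm hx0 hx1 hmono hxδ => ?_⟩
  obtain ⟨n, rfl⟩ : ∃ n, m = n + 1 := ⟨m - 1, by omega⟩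
  rw [Nat.add_sub_cancel] at hx1 ⊢
  have hsum := hsmall _ (isSampleBelow_map_range hx0 hx1 (fun j hj => hmono j (by omega))
    fun j hj => (hxδ j hj).le)
  rw [chainSum_map_range] at hsum
  rw [one_div, Real.rpow_inv_lt_iff_of_pos (Finset.sum_nonneg fun _ _ => by positivity) hε.le hp0]
  exact hsum
end

section
/- Let 1 ≤ p < ∞, η > 0, and let h : [0,1] → ℝ have finite total Wiener p-variation. Then the set {y ∈ [0,1] : h(y) < η/2 and for every neighborhood N of y there exists x ∈ N ∩ [0,1] with h(x) ≥ η} is finite. -/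
theorem stmt10 (p : ℝ) (hp : 1 ≤ p) (η : ℝ) (hη : 0 < η) (h : ℝ → ℝ)
    (hbv : BddAbove (varSumsR p h 0 1)) :
    Set.Finite {y ∈ Set.Icc (0:ℝ) 1 | h y < η / 2 ∧
      ∀ N ∈ nhds y, ∃ x ∈ N ∩ Set.Icc (0:ℝ) 1, η ≤ h x} := by
  set S := {y ∈ Set.Icc (0:ℝ) 1 | h y < η / 2 ∧
      ∀ N ∈ nhds y, ∃ x ∈ N ∩ Set.Icc (0:ℝ) 1, η ≤ h x} with hS
  by_contra hfin
  rw [← Set.not_infinite, not_not] at hfin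
  obtain ⟨M, hM⟩ := hbv
  set c := (η / 2) ^ p with hc
  have hη2 : (0:ℝ) < η / 2 := by linarith
  have hcpos : 0 < c := Real.rpow_pos_of_pos hη2 p
  -- M ≥ 0 since the trivial partition gives a nonneg element
  have hM0 : (0:ℝ) ≤ M := by
    have hmem : |h ((fun j : ℕ => (j:ℝ)) (0+1)) - h ((fun j : ℕ => (j:ℝ)) 0)| ^ p
        ∈ varSumsR p h 0 1 := by
      refine ⟨1, fun j => (j:ℝ), one_pos, by norm_num, by norm_num, ?_, ?_⟩
      · intro j hj; interval_cases j; norm_num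
      · simp
    have := hM hmem
    have h0 : (0:ℝ) ≤ |h ((1:ℕ):ℝ) - h ((0:ℕ):ℝ)| ^ p := Real.rpow_nonneg (abs_nonneg _) p
    simp only at this
    linarith
  obtain ⟨n₀, hn₀⟩ := exists_nat_gt (M / c)
  set n := n₀ + 1 with hndef
  have hnpos : 0 < n := Nat.succ_pos _
  have hnM : M < n * c := by
    have h1 : M / c < n := by
      have : (n₀:ℝ) ≤ n := by exact_mod_cast Nat.le_succ n₀
      linarith
    calc M = (M / c) * c := by field_simp
    _ < n * c := by exact mul_lt_mul_of_pos_right h1 hcpos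
  -- infinite interior part
  have hinf' : (S \ {0, 1}).Infinite := hfin.diff ((Set.finite_singleton 1).insert 0)
  obtain ⟨F, hFsub, hFcard⟩ := hinf'.exists_subset_card_eq n
  -- enumerate F in increasing order
  set e : Fin n → ℝ := fun i => ((F.orderIsoOfFin hFcard i : F) : ℝ) with he
  have hemono : StrictMono e := fun i j hij => by
    exact_mod_cast (F.orderIsoOfFin hFcard).strictMono hij
  have heS : ∀ i : Fin n, e i ∈ S \ {0, 1} := fun i =>
    hFsub (Finset.coe_mem _)
  have heIoo : ∀ i : Fin n, e i ∈ Set.Ioo (0:ℝ) 1 := by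
    intro i
    obtain ⟨hmem, hne⟩ := heS i
    simp only [Set.mem_insert_iff, Set.mem_singleton_iff, not_or] at hne
    obtain ⟨h01, -, -⟩ := hmem
    constructor
    · exact lt_of_le_of_ne h01.1 (Ne.symm hne.1)
    · exact lt_of_le_of_ne h01.2 hne.2
  -- extended sequence W
  set W : ℕ → ℝ := fun j => if hj : j = 0 then 0 else if hj' : j - 1 < n then e ⟨j - 1, hj'⟩ else 1
    with hW
  have hW0 : W 0 = 0 := by simp [hW]
  have hWlast : W (n + 1) = 1 := by simp [hW]
  have hWe : ∀ i : Fin n, W (i + 1) = e i := by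
    intro i
    have h1 : (i:ℕ) + 1 ≠ 0 := Nat.succ_ne_zero _
    simp only [hW, Nat.add_sub_cancel]
    rw [dif_neg h1, dif_pos i.isLt]
  have hWstep : ∀ j ≤ n, W j < W (j + 1) := by
    intro j hj
    rcases Nat.eq_zero_or_pos j with rfl | hjpos
    · rw [hW0]
      rcases Nat.lt_or_ge 0 n with h0n | h0n
      · have := hWe ⟨0, h0n⟩
        simp only at this
        rw [this]; exact (heIoo _).1
      · omega
    · rcases Nat.lt_or_ge j n with hjn | hjn
      · -- j ≥ 1, j < n : W j = e (j-1), W (j+1) = e j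
        have h1 : W j = e ⟨j - 1, by omega⟩ := by
          have h2 := hWe ⟨j - 1, by omega⟩
          simp only [Fin.val_mk] at h2
          rw [show j - 1 + 1 = j from by omega] at h2
          exact h2
        have h2 : W (j + 1) = e ⟨j, hjn⟩ := hWe ⟨j, hjn⟩
        rw [h1, h2]
        exact hemono (by simp [Fin.lt_def]; omega)
      · -- j = n
        have hjeq : j = n := le_antisymm hj hjn
        subst hjeq
        rw [hWlast]
        have h1 : W n = e ⟨n - 1, by omega⟩ := by
          have h2 := hWe ⟨n - 1, by omega⟩
          simp only [Fin.val_mk] at h2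
          rw [show n - 1 + 1 = n from by omega] at h2
          exact h2
        rw [h1]
        exact (heIoo _).2
  -- the minimal gap δ
  have hne : (Finset.range (n + 1)).Nonempty := ⟨0, by simp⟩
  set δ : ℝ := (Finset.range (n + 1)).inf' hne (fun j => W (j + 1) - W j) with hδ
  have hδle : ∀ j ≤ n, δ ≤ W (j + 1) - W j := by
    intro j hj
    exact Finset.inf'_le _ (Finset.mem_range.mpr (by omega))
  have hδpos : 0 < δ := by
    rw [hδ, Finset.lt_inf'_iff]
    intro j hj
    linarith [hWstep j (Nat.lt_succ_iff.mp (Finset.mem_range.mp hj))]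
  -- choose x near each e i with h x ≥ η
  have hchoice : ∀ i : Fin n, ∃ x, x ∈ Metric.ball (e i) (δ / 3) ∧ η ≤ h x := by
    intro i
    obtain ⟨⟨-, -, hnbhd⟩, -⟩ := heS i
    obtain ⟨x, ⟨hx1, _⟩, hx3⟩ := hnbhd (Metric.ball (e i) (δ / 3))
      (Metric.ball_mem_nhds _ (by linarith))
    exact ⟨x, hx1, hx3⟩
  choose x hxball hxη using hchoice
  have hxne : ∀ i, x i ≠ e i := by
    intro i hxe
    obtain ⟨⟨-, hlt, -⟩, -⟩ := heS i
    have := hxη i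
    rw [hxe] at this
    linarith
  set a : Fin n → ℝ := fun i => min (x i) (e i) with ha
  set b : Fin n → ℝ := fun i => max (x i) (e i) with hb
  have hab : ∀ i, a i < b i := fun i => min_lt_max.mpr (hxne i)
  have haW : ∀ i : Fin n, W (i + 1) - δ / 3 < a i := by
    intro i
    have hx := hxball i
    rw [Metric.mem_ball, Real.dist_eq] at hx
    have h1 : e i - δ / 3 < x i := by cases abs_lt.mp hx; linarith
    rw [hWe i]
    simp only [ha, lt_min_iff]
    constructor <;> linarith
  have hbW : ∀ i : Fin n, b i < W (i + 1) + δ / 3 := by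
    intro i
    have hx := hxball i
    rw [Metric.mem_ball, Real.dist_eq] at hx
    have h1 : x i < e i + δ / 3 := by cases abs_lt.mp hx; linarith
    rw [hWe i]
    simp only [hb, max_lt_iff]
    constructor <;> linarith
  have hjump : ∀ i, η / 2 ≤ |h (b i) - h (a i)| := by
    intro i
    obtain ⟨⟨-, hlt, -⟩, -⟩ := heS i
    have hx := hxη i
    rcases min_cases (x i) (e i) with ⟨h1, h2⟩ | ⟨h1, h2⟩
    · -- a i = x i, b i = e i
      have hbi : b i = e i := by simp [hb, max_eq_right h2]
      have hai : a i = x i := h1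
      rw [hbi, hai, abs_sub_comm]
      calc η / 2 = η - η / 2 := by ring
      _ ≤ h (x i) - h (e i) := by linarith
      _ ≤ |h (x i) - h (e i)| := le_abs_self _
    · have hbi : b i = x i := by simp [hb, max_eq_left (le_of_lt h2)]
      have hai : a i = e i := h1
      rw [hbi, hai]
      calc η / 2 = η - η / 2 := by ring
      _ ≤ h (x i) - h (e i) := by linarith
      _ ≤ |h (x i) - h (e i)| := le_abs_self _
  -- the partition
  set A : ℕ → ℝ := fun i => if hi : i < n then a ⟨i, hi⟩ else 0 with hA
  set B : ℕ → ℝ := fun i => if hi : i < n then b ⟨i, hi⟩ else 0 with hB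
  set t : ℕ → ℝ := fun j =>
    if j = 0 then 0 else if j = 2 * n + 1 then 1 else
      if j % 2 = 1 then A (j / 2) else B (j / 2 - 1) with ht
  have ht0 : t 0 = 0 := by simp [ht]
  have htlast : t (2 * n + 1) = 1 := by simp [ht]
  have htodd : ∀ i : Fin n, t (2 * (i:ℕ) + 1) = a i := by
    intro i
    have h1 : 2 * (i:ℕ) + 1 ≠ 0 := by omega
    have h2 : 2 * (i:ℕ) + 1 ≠ 2 * n + 1 := by have := i.isLt; omega
    have h3 : (2 * (i:ℕ) + 1) % 2 = 1 := by omega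
    have h4 : (2 * (i:ℕ) + 1) / 2 = i := by omega
    simp only [ht, h1, h2, h3, h4, if_neg, if_pos, if_false, hA, i.isLt, dif_pos]
  have hteven : ∀ i : Fin n, t (2 * (i:ℕ) + 2) = b i := by
    intro i
    have h1 : 2 * (i:ℕ) + 2 ≠ 0 := by omega
    have h2 : 2 * (i:ℕ) + 2 ≠ 2 * n + 1 := by omega
    have h3 : ¬ (2 * (i:ℕ) + 2) % 2 = 1 := by omega
    have h4 : (2 * (i:ℕ) + 2) / 2 - 1 = i := by omega
    simp only [ht, h1, h2, h3, h4, if_neg, if_false, hB, i.isLt, dif_pos]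
  -- strict monotonicity of the partition
  have hδ3 : 0 < δ / 3 := by linarith
  have htmono : ∀ j < 2 * n + 1, t j < t (j + 1) := by
    intro j hj
    rcases Nat.eq_zero_or_pos j with rfl | hjpos
    · -- t 0 = 0 < t 1 = a 0
      rw [ht0]
      have e1 : t (0 + 1) = a ⟨0, hnpos⟩ := by
        have h2 := htodd ⟨0, hnpos⟩
        simp only [Fin.val_mk, Nat.mul_zero, Nat.zero_add] at h2
        exact h2
      rw [e1]
      have h2 := haW ⟨0, hnpos⟩
      simp only [Fin.val_mk] at h2
      have hδ0 := hδle 0 (Nat.zero_le n)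
      rw [hW0] at hδ0
      have : W (0 + 1) = W 1 := rfl
      linarith [h2, hδ0]
    rcases Nat.even_or_odd j with ⟨k, hk⟩ | ⟨k, hk⟩
    · -- j even, j ≥ 2, j = 2k with 1 ≤ k ≤ n
      have hk1 : 1 ≤ k := by omega
      have hi : k - 1 < n := by omega
      have e1 : t j = b ⟨k - 1, hi⟩ := by
        rw [show j = 2 * (k - 1) + 2 by omega]; exact hteven ⟨k - 1, hi⟩
      rcases Nat.lt_or_ge k n with hi1 | hge
      · -- t (j+1) = a k
        have e2 : t (j + 1) = a ⟨k, hi1⟩ := by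
          rw [show j + 1 = 2 * k + 1 by omega]; exact htodd ⟨k, hi1⟩
        rw [e1, e2]
        have h1 := hbW ⟨k - 1, hi⟩
        have h2 := haW ⟨k, hi1⟩
        simp only at h1 h2
        have hWW : W (k - 1 + 1) + δ ≤ W (k + 1) := by
          have := hδle k (by omega)
          have hkk : k - 1 + 1 = k := by omega
          rw [hkk]; linarith
        linarith
      · -- k = n : j = 2n, t (j+1) = 1
        have hkn : k = n := by omega
        have e2 : t (j + 1) = 1 := by rw [show j + 1 = 2 * n + 1 by omega]; exact htlast
        rw [e1, e2]
        have h1 := hbW ⟨k - 1, hi⟩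
        simp only at h1
        have hδn : δ ≤ W (n + 1) - W n := hδle n (le_refl n)
        rw [hWlast] at hδn
        have hkk : k - 1 + 1 = n := by omega
        rw [hkk] at h1
        linarith
    · -- j odd: j = 2k+1 with k < n; t j = a k, t (j+1) = b k
      have hkn : k < n := by omega
      have e1 : t j = a ⟨k, hkn⟩ := by rw [show j = 2*k+1 by omega]; exact htodd ⟨k, hkn⟩
      have e2 : t (j + 1) = b ⟨k, hkn⟩ := by
        rw [show j + 1 = 2*k+2 by omega]; exact hteven ⟨k, hkn⟩
      rw [e1, e2]; exact hab _
  -- the sum is in varSumsR and is large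
  set s : ℝ := ∑ j ∈ Finset.range (2 * n + 1), |h (t (j + 1)) - h (t j)| ^ p with hs
  have hsmem : s ∈ varSumsR p h 0 1 :=
    ⟨2 * n + 1, t, by omega, ht0, htlast, htmono, rfl⟩
  have hsle : s ≤ M := hM hsmem
  -- lower bound
  have hterm : ∀ i ∈ Finset.range n, c ≤ |h (t (2 * i + 1 + 1)) - h (t (2 * i + 1))| ^ p := by
    intro i hi
    have hin : i < n := Finset.mem_range.mp hi
    have e1 : t (2 * i + 1) = a ⟨i, hin⟩ := htodd ⟨i, hin⟩
    have e2 : t (2 * i + 1 + 1) = b ⟨i, hin⟩ := by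
      rw [show 2*i+1+1 = 2*i+2 by omega]; exact hteven ⟨i, hin⟩
    rw [e1, e2]
    exact Real.rpow_le_rpow (le_of_lt hη2) (hjump ⟨i, hin⟩) (by linarith)
  have hsub : (Finset.range n).image (fun i => 2 * i + 1) ⊆ Finset.range (2 * n + 1) := by
    intro j hj
    obtain ⟨i, hi, rfl⟩ := Finset.mem_image.mp hj
    have hin := Finset.mem_range.mp hi
    refine Finset.mem_range.mpr ?_
    show 2 * i + 1 < 2 * n + 1
    omega
  have hlower : (n : ℝ) * c ≤ s := by
    calc (n : ℝ) * c = ∑ _i ∈ Finset.range n, c := by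
          rw [Finset.sum_const, Finset.card_range, nsmul_eq_mul]
    _ ≤ ∑ i ∈ Finset.range n, |h (t (2 * i + 1 + 1)) - h (t (2 * i + 1))| ^ p :=
          Finset.sum_le_sum hterm
    _ = ∑ j ∈ (Finset.range n).image (fun i => 2 * i + 1), |h (t (j + 1)) - h (t j)| ^ p :=
          (Finset.sum_image (f := fun j => |h (t (j + 1)) - h (t j)| ^ p)
            (g := fun i => 2 * i + 1) (fun i hi j hj hij => by
              have h2 : 2 * i + 1 = 2 * j + 1 := hij
              omega)).symm
    _ ≤ ∑ j ∈ Finset.range (2 * n + 1), |h (t (j + 1)) - h (t j)| ^ p :=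
          Finset.sum_le_sum_of_subset_of_nonneg hsub
            (fun j _ _ => Real.rpow_nonneg (abs_nonneg _) p)
  linarith
end

section
/- Let 1 ≤ p < ∞. For every pair of functions F, G : [0,1] → ℂ of finite total Wiener p-variation such that inf_{x∈[0,1]}(|F(x)| + |G(x)|) > 0, the multiplication in BV_p[0,1] is locally open at (F, G): for every ε > 0 there exists δ > 0 such that every h with ‖h‖_{BV_p} < δ can be written as h = f·g − F·G with ‖f − F‖_{BV_p} < ε and ‖g − G‖_{BV_p} < ε, where f, g ∈ BV_p[0,1]. -/
/-!
Let `c = inf (|F| + |G|)`. A `BV_p` function has one-sided limits, so `F` oscillates by less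
than `c / 3` on each cell of some finite partition of `[0,1]` into points and open intervals;
hence on each cell `|F| ≥ c / 3` throughout or `|G| ≥ c / 3` throughout. Given `h`, correct `G`
by `h / F` on the cells of the first kind and `F` by `h / G` on the others, so that
`f g = F G + h`. Inside a cell the increments of the correction are controlled by those of `h`
and of `F`, `G`; between cells it jumps by at most `‖h‖_∞ / (c / 3)`, and there are finitely many
cells, so the correction has `BV_p` norm `O(‖h‖_{BV_p})`.
-/

open Set

section Variation

variable {p : ℝ} {f g : ℝ → ℂ} {a b y z : ℝ}

lemma strictMonoOn_Iic_of_lt_add_one {m : ℕ} {t : ℕ → ℝ} (ht : ∀ j < m, t j < t (j + 1)) :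
    StrictMonoOn t (Iic m) :=
  strictMonoOn_Iic_of_lt_succ fun j hj => by simpa [Order.succ_eq_add_one] using ht j hj

lemma varSums_eq_empty (hba : b ≤ a) : varSums p f a b = ∅ := by
  refine eq_empty_of_forall_notMem ?_
  rintro _ ⟨m, t, hm, rfl, rfl, ht, -⟩
  exact hba.not_gt (strictMonoOn_Iic_of_lt_add_one ht (by simp) (by simp) hm)

lemma pVar_self : pVar p f a a = 0 := by
  simp [pVar, varSums_eq_empty le_rfl]

lemma pVar_nonneg : 0 ≤ pVar p f a b :=
  Real.sSup_nonneg (by rintro _ ⟨m, t, -, -, -, -, rfl⟩; positivity)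

lemma rpow_mem_varSums (hab : a < b) : ‖f b - f a‖ ^ p ∈ varSums p f a b :=
  ⟨1, fun j => if j = 0 then a else b, one_pos, rfl, rfl, by simpa, by simp⟩

lemma add_mem_varSums {s : ℝ} (hs : s ∈ varSums p f a y) (hyz : y < z) :
    s + ‖f z - f y‖ ^ p ∈ varSums p f a z := by
  obtain ⟨m, t, hm, h0, rfl, ht, rfl⟩ := hs
  refine ⟨m + 1, fun j => if j ≤ m then t j else z, by omega, by simp [h0], by simp, ?_, ?_⟩
  · intro j hj
    rcases Nat.lt_or_ge j m with hj | hj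
    · simp [hj.le, Nat.succ_le_of_lt hj, ht j hj]
    · obtain rfl : j = m := by omega
      simp [hyz]
  · rw [Finset.sum_range_succ]
    congr 1
    · refine Finset.sum_congr rfl fun j hj => ?_
      have hj := Finset.mem_range.1 hj
      simp [hj.le, Nat.succ_le_of_lt hj]
    · simp

lemma bddAbove_varSums_of_le (hf : BddAbove (varSums p f a b)) (hzb : z ≤ b) :
    BddAbove (varSums p f a z) := by
  rcases hzb.eq_or_lt with rfl | hzb
  · exact hf
  obtain ⟨B, hB⟩ := hf
  exact ⟨B, fun s hs =>
    (le_add_of_nonneg_right (by positivity)).trans (hB (add_mem_varSums hs hzb))⟩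

lemma norm_sub_rpow_le_pVar_sub (hf : BddAbove (varSums p f a b)) (hay : a ≤ y) (hyz : y < z)
    (hzb : z ≤ b) : ‖f z - f y‖ ^ p ≤ pVar p f a z - pVar p f a y := by
  have hfz := bddAbove_varSums_of_le hf hzb
  rcases hay.eq_or_lt with rfl | hay
  · rw [pVar_self, sub_zero]
    exact le_csSup hfz (rpow_mem_varSums hyz)
  · rw [le_sub_iff_add_le', ← le_sub_iff_add_le]
    exact csSup_le ⟨_, rpow_mem_varSums hay⟩ fun s hs =>
      le_sub_iff_add_le.2 (le_csSup hfz (add_mem_varSums hs hyz))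

lemma pVar_mono (hf : BddAbove (varSums p f a b)) (hay : a ≤ y) (hyz : y ≤ z) (hzb : z ≤ b) :
    pVar p f a y ≤ pVar p f a z := by
  rcases hyz.eq_or_lt with rfl | hyz
  · rfl
  · linarith [norm_sub_rpow_le_pVar_sub hf hay hyz hzb, (by positivity : 0 ≤ ‖f z - f y‖ ^ p)]

lemma norm_le_add_pVar_rpow (hp : 0 < p) (hf : BddAbove (varSums p f a b)) {x : ℝ}
    (hx : x ∈ Icc a b) : ‖f x‖ ≤ ‖f a‖ + pVar p f a b ^ (1 / p) := by
  rcases hx.1.eq_or_lt with rfl | hax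
  · exact le_add_of_nonneg_right (Real.rpow_nonneg pVar_nonneg _)
  have hV : ‖f x - f a‖ ^ p ≤ pVar p f a b := by
    have := norm_sub_rpow_le_pVar_sub hf le_rfl hax hx.2
    rw [pVar_self, sub_zero] at this
    exact this.trans (pVar_mono hf hx.1 hx.2 le_rfl)
  have : ‖f x - f a‖ ≤ pVar p f a b ^ (1 / p) := by
    rwa [one_div, Real.le_rpow_inv_iff_of_pos (norm_nonneg _) pVar_nonneg hp]
  linarith [norm_le_norm_add_norm_sub' (f x) (f a)]

lemma rpow_add_le_two_rpow (hp : 0 ≤ p) {x y : ℝ} (hx : 0 ≤ x) (hy : 0 ≤ y) :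
    (x + y) ^ p ≤ 2 ^ p * x ^ p + 2 ^ p * y ^ p := by
  rw [← Real.mul_rpow zero_le_two hx, ← Real.mul_rpow zero_le_two hy]
  rcases le_total x y with hxy | hxy
  · exact (Real.rpow_le_rpow (by positivity) (by linarith) hp).trans
      (le_add_of_nonneg_left (by positivity))
  · exact (Real.rpow_le_rpow (by positivity) (by linarith) hp).trans
      (le_add_of_nonneg_right (by positivity))

theorem forall_mem_varSums_le {f₁ f₂ : ℝ → ℂ} {φ : ℝ → ℝ} {A B : ℝ} (hA : 0 ≤ A) (hB : 0 ≤ B)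
    (hf₁ : BddAbove (varSums p f₁ a b)) (hf₂ : BddAbove (varSums p f₂ a b))
    (hg : ∀ x y, a ≤ x → x < y → y ≤ b →
      ‖g y - g x‖ ^ p ≤ A * ‖f₁ y - f₁ x‖ ^ p + B * ‖f₂ y - f₂ x‖ ^ p + (φ y - φ x)) :
    ∀ s ∈ varSums p g a b, s ≤ A * pVar p f₁ a b + B * pVar p f₂ a b + (φ b - φ a) := by
  rintro _ ⟨m, t, hm, rfl, rfl, ht, rfl⟩
  have hmono := (strictMonoOn_Iic_of_lt_add_one ht).monotoneOn
  have hmem (j : ℕ) (hj : j ≤ m) : t j ∈ Icc (t 0) (t m) :=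
    ⟨hmono (by simp) (by simpa) (Nat.zero_le j), hmono (by simpa) (by simp) hj⟩
  calc _ ≤ ∑ j ∈ Finset.range m, (A * ‖f₁ (t (j + 1)) - f₁ (t j)‖ ^ p
          + B * ‖f₂ (t (j + 1)) - f₂ (t j)‖ ^ p + (φ (t (j + 1)) - φ (t j))) :=
        Finset.sum_le_sum fun j hj => by
          have hj := Finset.mem_range.1 hj
          exact hg _ _ (hmem j hj.le).1 (ht j hj) (hmem (j + 1) hj).2
    _ = A * ∑ j ∈ Finset.range m, ‖f₁ (t (j + 1)) - f₁ (t j)‖ ^ p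
          + B * ∑ j ∈ Finset.range m, ‖f₂ (t (j + 1)) - f₂ (t j)‖ ^ p + (φ (t m) - φ (t 0)) := by
        rw [Finset.sum_add_distrib, Finset.sum_add_distrib,
          Finset.sum_range_sub (fun j => φ (t j)), Finset.mul_sum, Finset.mul_sum]
    _ ≤ _ := by
        gcongr
        · exact le_csSup hf₁ ⟨m, t, hm, rfl, rfl, ht, rfl⟩
        · exact le_csSup hf₂ ⟨m, t, hm, rfl, rfl, ht, rfl⟩

lemma bddAbove_varSums_add (hp : 0 ≤ p) (hf : BddAbove (varSums p f a b))
    (hg : BddAbove (varSums p g a b)) : BddAbove (varSums p (f + g) a b) := by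
  refine ⟨_, forall_mem_varSums_le (A := 2 ^ p) (B := 2 ^ p) (φ := 0) (by positivity)
    (by positivity) hf hg fun x y _ _ _ => ?_⟩
  have hxy : ‖(f + g) y - (f + g) x‖ ≤ ‖f y - f x‖ + ‖g y - g x‖ := by
    simpa [add_sub_add_comm] using norm_add_le (f y - f x) (g y - g x)
  simpa using (Real.rpow_le_rpow (norm_nonneg _) hxy hp).trans
    (rpow_add_le_two_rpow hp (norm_nonneg _) (norm_nonneg _))

end Variation

section BVNorm

variable {p : ℝ} {f : ℝ → ℂ}

lemma bvNorm_nonneg : 0 ≤ bvNorm p f :=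
  add_nonneg (Real.sSup_nonneg (by rintro _ ⟨x, -, rfl⟩; positivity))
    (Real.rpow_nonneg pVar_nonneg _)

lemma norm_le_bvNorm (hp : 0 < p) (hf : BddAbove (varSums p f 0 1)) {x : ℝ}
    (hx : x ∈ Icc (0 : ℝ) 1) : ‖f x‖ ≤ bvNorm p f := by
  have hbdd : BddAbove ((fun x => ‖f x‖) '' Icc (0 : ℝ) 1) :=
    ⟨_, by rintro _ ⟨y, hy, rfl⟩; exact norm_le_add_pVar_rpow hp hf hy⟩
  exact (le_csSup hbdd ⟨x, hx, rfl⟩).trans (le_add_of_nonneg_right (Real.rpow_nonneg pVar_nonneg _))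

lemma pVar_le_bvNorm_rpow (hp : 0 < p) : pVar p f 0 1 ≤ bvNorm p f ^ p := by
  have : pVar p f 0 1 ^ p⁻¹ ≤ bvNorm p f := by
    rw [bvNorm, one_div]
    exact le_add_of_nonneg_left (Real.sSup_nonneg (by rintro _ ⟨x, -, rfl⟩; positivity))
  exact (Real.rpow_inv_le_iff_of_pos pVar_nonneg bvNorm_nonneg hp).1 this

lemma bvNorm_le (hp : 0 < p) {M W : ℝ} (hM : ∀ x ∈ Icc (0 : ℝ) 1, ‖f x‖ ≤ M) (hW : 0 ≤ W)
    (hV : ∀ s ∈ varSums p f 0 1, s ≤ W ^ p) : bvNorm p f ≤ M + W := by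
  have hsup : supNorm f ≤ M :=
    csSup_le ((nonempty_Icc.2 zero_le_one).image _) (by rintro _ ⟨x, hx, rfl⟩; exact hM x hx)
  have hvar : pVar p f 0 1 ^ p⁻¹ ≤ W :=
    (Real.rpow_inv_le_iff_of_pos pVar_nonneg hW hp).2 (Real.sSup_le hV (by positivity))
  rw [bvNorm, one_div]
  exact add_le_add hsup hvar

end BVNorm

section Oscillation

variable {p : ℝ} {f : ℝ → ℂ} {a b d x : ℝ}

lemma forall_norm_sub_lt_of_rpow_lt (hp : 0 < p) (hd : 0 < d) {s : Set ℝ}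
    (h : ∀ y ∈ s, ∀ z ∈ s, y < z → ‖f z - f y‖ ^ p < d ^ p) :
    ∀ y ∈ s, ∀ z ∈ s, ‖f y - f z‖ < d := by
  intro y hy z hz
  rcases lt_trichotomy y z with hyz | rfl | hzy
  · rw [norm_sub_rev]
    exact (Real.rpow_lt_rpow_iff (norm_nonneg _) hd.le hp).1 (h y hy z hz hyz)
  · simpa using hd
  · exact (Real.rpow_lt_rpow_iff (norm_nonneg _) hd.le hp).1 (h z hz y hy hzy)

-- `‖f z - f y‖ ^ p ≤ V z - V y` for the monotone `V := pVar p f a`, whose increments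
-- become small near `x`.
theorem exists_norm_sub_lt_right (hp : 0 < p) (hf : BddAbove (varSums p f a b)) (hd : 0 < d)
    (hx : x ∈ Ico a b) : ∃ c ∈ Ioc x b, ∀ y ∈ Ioo x c, ∀ z ∈ Ioo x c, ‖f y - f z‖ < d := by
  set V := fun y => pVar p f a y
  have hne : (V '' Ioc x b).Nonempty := (nonempty_Ioc.2 hx.2).image V
  obtain ⟨_, ⟨c, hc, rfl⟩, hcV⟩ :=
    exists_lt_of_csInf_lt hne
      (lt_add_of_pos_right (sInf (V '' Ioc x b)) (Real.rpow_pos_of_pos hd p))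
  refine ⟨c, hc, forall_norm_sub_lt_of_rpow_lt hp hd fun y hy z hz hyz => ?_⟩
  have hVy : sInf (V '' Ioc x b) ≤ V y :=
    csInf_le ⟨0, by rintro _ ⟨_, -, rfl⟩; exact pVar_nonneg⟩ ⟨y, ⟨hy.1, hy.2.le.trans hc.2⟩, rfl⟩
  have hVz : V z ≤ V c := pVar_mono hf (hx.1.trans hz.1.le) hz.2.le hc.2
  linarith [norm_sub_rpow_le_pVar_sub hf (hx.1.trans hy.1.le) hyz (hz.2.le.trans hc.2)]

theorem exists_norm_sub_lt_left (hp : 0 < p) (hf : BddAbove (varSums p f a b)) (hd : 0 < d)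
    (hx : x ∈ Ioc a b) : ∃ c ∈ Ico a x, ∀ y ∈ Ioo c x, ∀ z ∈ Ioo c x, ‖f y - f z‖ < d := by
  set V := fun y => pVar p f a y
  have hne : (V '' Ico a x).Nonempty := (nonempty_Ico.2 hx.1).image V
  have hbdd : BddAbove (V '' Ico a x) :=
    ⟨V x, by rintro _ ⟨y, hy, rfl⟩; exact pVar_mono hf hy.1 hy.2.le hx.2⟩
  obtain ⟨_, ⟨c, hc, rfl⟩, hcV⟩ :=
    exists_lt_of_lt_csSup hne (sub_lt_self (sSup (V '' Ico a x)) (Real.rpow_pos_of_pos hd p))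
  refine ⟨c, hc, forall_norm_sub_lt_of_rpow_lt hp hd fun y hy z hz hyz => ?_⟩
  have hVz : V z ≤ sSup (V '' Ico a x) := le_csSup hbdd ⟨z, ⟨hc.1.trans hz.1.le, hz.2⟩, rfl⟩
  have hVy : V c ≤ V y := pVar_mono hf hc.1 hy.1.le (hy.2.le.trans hx.2)
  linarith [norm_sub_rpow_le_pVar_sub hf (hc.1.trans hy.1.le) hyz (hz.2.le.trans hx.2)]

end Oscillation

theorem exists_finset_forall_of_forall_Ioo {a b : ℝ} {R : ℝ → ℝ → Prop} (hab : a ≤ b)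
    (hright : ∀ x ∈ Ico a b, ∃ c ∈ Ioc x b, ∀ y ∈ Ioo x c, ∀ z ∈ Ioo x c, R y z)
    (hleft : ∀ x ∈ Ioc a b, ∃ c ∈ Ico a x, ∀ y ∈ Ioo c x, ∀ z ∈ Ioo c x, R y z) :
    ∃ P : Finset ℝ, ∀ y z, a ≤ y → y < z → z ≤ b → (∀ q ∈ P, q ∉ Icc y z) → R y z := by
  let Good : ℝ → Prop := fun e =>
    ∃ P : Finset ℝ, ∀ y z, a ≤ y → y < z → z ≤ e → (∀ q ∈ P, q ∉ Icc y z) → R y z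
  have extend (s e : ℝ) (hs : Good s) (hse : ∀ y ∈ Ioo s e, ∀ z ∈ Ioo s e, R y z) : Good e := by
    obtain ⟨P, hP⟩ := hs
    refine ⟨insert s (insert e P), fun y z hay hyz hze hq => ?_⟩
    by_cases hzs : z ≤ s
    · exact hP y z hay hyz hzs fun q hqP => hq q (by simp [hqP])
    · have hs : s ∉ Icc y z := hq s (by simp)
      have he : e ∉ Icc y z := hq e (by simp)
      simp only [mem_Icc, not_and_or, not_le] at hs he hzs
      exact hse y ⟨by grind, by grind⟩ z ⟨by grind, by grind⟩
  set A := {e ∈ Icc a b | Good e}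
  have haA : a ∈ A :=
    ⟨⟨le_rfl, hab⟩, ∅, fun y z hay hyz hza _ => absurd (hay.trans_lt hyz) hza.not_gt⟩
  have hbdd : BddAbove A := ⟨b, fun e he => he.1.2⟩
  have has : a ≤ sSup A := le_csSup hbdd haA
  have hsb : sSup A ≤ b := csSup_le ⟨a, haA⟩ fun e he => he.1.2
  have hs : Good (sSup A) := by
    rcases has.eq_or_lt with h | has
    · exact h ▸ haA.2
    obtain ⟨c, hc, hcR⟩ := hleft _ ⟨has, hsb⟩
    obtain ⟨e, he, hce⟩ := exists_lt_of_lt_csSup ⟨a, haA⟩ hc.2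
    exact extend e _ he.2 fun y hy z hz => hcR y ⟨hce.trans hy.1, hy.2⟩ z ⟨hce.trans hz.1, hz.2⟩
  rcases hsb.eq_or_lt with h | hsb
  · exact h ▸ hs
  obtain ⟨c, hc, hcR⟩ := hright _ ⟨has, hsb⟩
  exact absurd (le_csSup hbdd ⟨⟨has.trans hc.1.le, hc.2⟩, extend _ c hs hcR⟩) hc.1.not_ge

theorem exists_finset_norm_sub_lt {p a b d : ℝ} {f : ℝ → ℂ} (hp : 0 < p)
    (hf : BddAbove (varSums p f a b)) (hab : a ≤ b) (hd : 0 < d) :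
    ∃ P : Finset ℝ, ∀ y z, a ≤ y → y < z → z ≤ b → (∀ q ∈ P, q ∉ Icc y z) → ‖f y - f z‖ < d :=
  exists_finset_forall_of_forall_Ioo hab (fun _ hx => exists_norm_sub_lt_right hp hf hd hx)
    (fun _ hx => exists_norm_sub_lt_left hp hf hd hx)

section CellIndex

-- The fibres of `cellIndex P` are the points of `P` and the open gaps between them.
noncomputable def cellIndex (P : Finset ℝ) (x : ℝ) : ℕ :=
  (P.filter (· < x)).card + (P.filter (· ≤ x)).card

variable {P : Finset ℝ}

lemma filter_lt_subset {x y : ℝ} (hxy : x ≤ y) : P.filter (· < x) ⊆ P.filter (· < y) :=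
  Finset.monotone_filter_right P (p := (· < x)) (q := (· < y)) fun _ _ h => h.trans_le hxy

lemma filter_le_subset {x y : ℝ} (hxy : x ≤ y) : P.filter (· ≤ x) ⊆ P.filter (· ≤ y) :=
  Finset.monotone_filter_right P (p := (· ≤ x)) (q := (· ≤ y)) fun _ _ h => h.trans hxy

lemma cellIndex_mono (P : Finset ℝ) : Monotone (cellIndex P) := fun _ _ hxy =>
  add_le_add (Finset.card_le_card (filter_lt_subset hxy))
    (Finset.card_le_card (filter_le_subset hxy))

lemma cellIndex_lt {x y q : ℝ} (hxy : x < y) (hq : q ∈ P) (hqxy : q ∈ Icc x y) :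
    cellIndex P x < cellIndex P y := by
  rcases hqxy.2.eq_or_lt with rfl | hqy
  · have : (P.filter (· ≤ x)).card < (P.filter (· ≤ q)).card :=
      Finset.card_lt_card ((Finset.ssubset_iff_of_subset (filter_le_subset hxy.le)).2
        ⟨q, by simp [hq], by simp [hxy]⟩)
    exact add_lt_add_of_le_of_lt (Finset.card_le_card (filter_lt_subset hxy.le)) this
  · have : (P.filter (· < x)).card < (P.filter (· < y)).card :=
      Finset.card_lt_card ((Finset.ssubset_iff_of_subset (filter_lt_subset hxy.le)).2
        ⟨q, by simp [hq, hqy], by simp [hqxy.1]⟩)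
    exact add_lt_add_of_lt_of_le this (Finset.card_le_card (filter_le_subset hxy.le))

end CellIndex

-- Equivalently, `S ∩ [0,1]` is a finite union of intervals.
def SwitchesFinitely (S : Set ℝ) : Prop :=
  ∃ ι : ℝ → ℕ, Monotone ι ∧ ∀ x ∈ Icc (0 : ℝ) 1, ∀ y ∈ Icc (0 : ℝ) 1, ι x = ι y → (x ∈ S ↔ y ∈ S)

lemma SwitchesFinitely.compl {S : Set ℝ} (hS : SwitchesFinitely S) : SwitchesFinitely Sᶜ :=
  let ⟨ι, hι, hιS⟩ := hS
  ⟨ι, hι, fun x hx y hy hxy => not_congr (hιS x hx y hy hxy)⟩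

theorem exists_switchesFinitely_split {p c : ℝ} {F G : ℝ → ℂ} (hp : 0 < p)
    (hF : BddAbove (varSums p F 0 1)) (hc : 0 < c)
    (hFG : ∀ x ∈ Icc (0 : ℝ) 1, c ≤ ‖F x‖ + ‖G x‖) :
    ∃ T, SwitchesFinitely T ∧ (∀ x ∈ Icc (0 : ℝ) 1, x ∈ T → c / 3 ≤ ‖F x‖) ∧
      (∀ x ∈ Icc (0 : ℝ) 1, x ∉ T → c / 3 ≤ ‖G x‖) := by
  obtain ⟨P, hP⟩ := exists_finset_norm_sub_lt hp hF zero_le_one (by positivity : 0 < c / 3)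
  have hfib : ∀ x ∈ Icc (0 : ℝ) 1, ∀ y ∈ Icc (0 : ℝ) 1,
      cellIndex P x = cellIndex P y → ‖F x - F y‖ < c / 3 := by
    intro x hx y hy hxy
    rcases lt_trichotomy x y with h | rfl | h
    · exact hP x y hx.1 h hy.2 fun q hq hqI => (cellIndex_lt h hq hqI).ne hxy
    · simpa using hc
    · rw [norm_sub_rev]
      exact hP y x hy.1 h hx.2 fun q hq hqI => (cellIndex_lt h hq hqI).ne hxy.symm
  -- `F` varies by less than `c / 3` on a fibre of `cellIndex P`, so deciding by whether
  -- `‖F‖` reaches `2c / 3` somewhere on the fibre works.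
  refine ⟨{x | ∃ y ∈ Icc (0 : ℝ) 1, cellIndex P y = cellIndex P x ∧ 2 * c / 3 ≤ ‖F y‖},
    ⟨cellIndex P, cellIndex_mono P, fun x _ y _ hxy => ?_⟩, ?_, ?_⟩
  · exact ⟨fun ⟨z, hz, hzx, hFz⟩ => ⟨z, hz, hzx.trans hxy, hFz⟩,
      fun ⟨z, hz, hzy, hFz⟩ => ⟨z, hz, hzy.trans hxy.symm, hFz⟩⟩
  · rintro x hx ⟨y, hy, hyx, hFy⟩
    linarith [hfib y hy x hx hyx, norm_sub_norm_le (F y) (F x)]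
  · intro x hx hxT
    have : ‖F x‖ < 2 * c / 3 := not_le.1 fun h => hxT ⟨x, hx, rfl, h⟩
    linarith [hFG x hx]

lemma norm_div_sub_div_le {𝕜 : Type*} [NormedField 𝕜] {a b u w : 𝕜} {c β : ℝ} (hc : 0 < c)
    (hu : c ≤ ‖u‖) (hw : c ≤ ‖w‖) (hb : ‖b‖ ≤ β) :
    ‖a / u - b / w‖ ≤ ‖a - b‖ / c + β * ‖u - w‖ / c ^ 2 := by
  have hu0 : u ≠ 0 := norm_pos_iff.1 (hc.trans_le hu)
  have hw0 : w ≠ 0 := norm_pos_iff.1 (hc.trans_le hw)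
  have hsplit : a / u - b / w = (a - b) / u + b * (w - u) / (u * w) := by
    field_simp
    ring
  calc ‖a / u - b / w‖ ≤ ‖a - b‖ / ‖u‖ + ‖b‖ * ‖u - w‖ / (‖u‖ * ‖w‖) := by
        rw [hsplit, ← norm_div, norm_sub_rev u w, ← norm_mul, ← norm_mul, ← norm_div]
        exact norm_add_le _ _
    _ ≤ ‖a - b‖ / c + β * ‖u - w‖ / c ^ 2 := by
        rw [sq]
        gcongr
        exact mul_nonneg ((norm_nonneg b).trans hb) (norm_nonneg _)

theorem exists_bvNorm_indicator_div_le {p c : ℝ} {D : ℝ → ℂ} {S : Set ℝ} (hp : 0 < p)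
    (hD : BddAbove (varSums p D 0 1)) (hS : SwitchesFinitely S) (hc : 0 < c)
    (hDS : ∀ x ∈ Icc (0 : ℝ) 1, x ∈ S → c ≤ ‖D x‖) :
    ∃ C > 0, ∀ h : ℝ → ℂ, BddAbove (varSums p h 0 1) →
      BddAbove (varSums p (S.indicator (h / D)) 0 1) ∧
        bvNorm p (S.indicator (h / D)) ≤ C * bvNorm p h := by
  obtain ⟨ι, hι, hιS⟩ := hS
  have hK : (0 : ℝ) ≤ ι 1 - ι 0 := sub_nonneg.2 (by exact_mod_cast hι zero_le_one)
  set C₀ := 2 ^ p / c ^ p + 2 ^ p / (c ^ 2) ^ p * pVar p D 0 1 + (ι 1 - ι 0) / c ^ p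
  have hC₀ : 0 ≤ C₀ :=
    add_nonneg (add_nonneg (by positivity) (mul_nonneg (by positivity) pVar_nonneg))
      (div_nonneg hK (by positivity))
  refine ⟨1 / c + C₀ ^ (1 / p), by positivity, fun h hh => ?_⟩
  set v := S.indicator (h / D)
  set β := bvNorm p h
  have hβ : 0 ≤ β := bvNorm_nonneg
  have hhβ : ∀ x ∈ Icc (0 : ℝ) 1, ‖h x‖ ≤ β := fun x hx => norm_le_bvNorm hp hh hx
  have hv : ∀ x ∈ Icc (0 : ℝ) 1, ‖v x‖ ≤ β / c := by
    intro x hx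
    by_cases hxS : x ∈ S
    · simp only [v, Set.indicator_of_mem hxS, Pi.div_apply, norm_div]
      exact div_le_div₀ hβ (hhβ x hx) hc (hDS x hx hxS)
    · simp only [v, Set.indicator_of_notMem hxS, norm_zero]
      positivity
  have hstep : ∀ x y, 0 ≤ x → x < y → y ≤ 1 → ‖v y - v x‖ ^ p ≤
      2 ^ p / c ^ p * ‖h y - h x‖ ^ p + 2 ^ p * β ^ p / (c ^ 2) ^ p * ‖D y - D x‖ ^ p +
        (β ^ p / c ^ p * ι y - β ^ p / c ^ p * ι x) := by
    intro x y hx0 hxy hy1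
    have hx : x ∈ Icc (0 : ℝ) 1 := ⟨hx0, hxy.le.trans hy1⟩
    have hy : y ∈ Icc (0 : ℝ) 1 := ⟨hx0.trans hxy.le, hy1⟩
    have hιxy : (ι x : ℝ) ≤ ι y := by exact_mod_cast hι hxy.le
    have hvar : 0 ≤ 2 ^ p / c ^ p * ‖h y - h x‖ ^ p +
        2 ^ p * β ^ p / (c ^ 2) ^ p * ‖D y - D x‖ ^ p := by positivity
    have hjump : 0 ≤ β ^ p / c ^ p * ι y - β ^ p / c ^ p * ι x := by
      rw [← mul_sub]
      exact mul_nonneg (by positivity) (sub_nonneg.2 hιxy)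
    by_cases hxyS : x ∈ S ↔ y ∈ S
    · by_cases hxS : x ∈ S
      · have hyS := hxyS.1 hxS
        have hq := norm_div_sub_div_le (a := h y) hc (hDS y hy hyS) (hDS x hx hxS) (hhβ x hx)
        simp only [v, Set.indicator_of_mem hxS, Set.indicator_of_mem hyS, Pi.div_apply]
        calc ‖h y / D y - h x / D x‖ ^ p
            ≤ (‖h y - h x‖ / c + β * ‖D y - D x‖ / c ^ 2) ^ p :=
              Real.rpow_le_rpow (norm_nonneg _) hq hp.le
          _ ≤ 2 ^ p * (‖h y - h x‖ / c) ^ p + 2 ^ p * (β * ‖D y - D x‖ / c ^ 2) ^ p :=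
              rpow_add_le_two_rpow hp.le (by positivity) (by positivity)
          _ = 2 ^ p / c ^ p * ‖h y - h x‖ ^ p + 2 ^ p * β ^ p / (c ^ 2) ^ p * ‖D y - D x‖ ^ p := by
              rw [Real.div_rpow (norm_nonneg _) hc.le,
                Real.div_rpow (by positivity) (by positivity),
                Real.mul_rpow hβ (norm_nonneg _)]
              ring
          _ ≤ _ := le_add_of_nonneg_right hjump
      · have hyS : y ∉ S := fun hyS => hxS (hxyS.2 hyS)
        simp only [v, Set.indicator_of_notMem hxS, Set.indicator_of_notMem hyS, sub_zero, norm_zero,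
          Real.zero_rpow hp.ne']
        positivity
    · -- `x` and `y` lie in different fibres of `ι`, so `ι` jumps by at least one between them.
      have hιlt : (ι x : ℝ) + 1 ≤ ι y := by
        have : ι x ≠ ι y := fun h => hxyS (hιS x hx y hy h)
        exact_mod_cast (hι hxy.le).lt_of_ne this
      have hv0 : v x = 0 ∨ v y = 0 := by
        by_contra! h0
        exact hxyS ⟨fun _ => Set.mem_of_indicator_ne_zero h0.2,
          fun _ => Set.mem_of_indicator_ne_zero h0.1⟩
      have hdiff : ‖v y - v x‖ ≤ β / c := by
        rcases hv0 with h0 | h0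
        · simpa [h0] using hv y hy
        · simpa [h0] using hv x hx
      calc ‖v y - v x‖ ^ p ≤ (β / c) ^ p := Real.rpow_le_rpow (norm_nonneg _) hdiff hp.le
        _ = β ^ p / c ^ p * 1 := by rw [Real.div_rpow hβ hc.le, mul_one]
        _ ≤ β ^ p / c ^ p * ι y - β ^ p / c ^ p * ι x := by
            rw [← mul_sub]
            gcongr
            linarith
        _ ≤ _ := le_add_of_nonneg_left hvar
  have hbound : ∀ s ∈ varSums p v 0 1, s ≤ (β * C₀ ^ (1 / p)) ^ p := by
    intro s hs
    refine (forall_mem_varSums_le (φ := fun z => β ^ p / c ^ p * ι z) (by positivity)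
      (by positivity) hh hD hstep s hs).trans ?_
    rw [Real.mul_rpow hβ (by positivity), ← Real.rpow_mul hC₀, one_div_mul_cancel hp.ne',
      Real.rpow_one]
    have := pVar_le_bvNorm_rpow hp (f := h)
    calc _ ≤ 2 ^ p / c ^ p * β ^ p + 2 ^ p * β ^ p / (c ^ 2) ^ p * pVar p D 0 1 +
          (β ^ p / c ^ p * ι 1 - β ^ p / c ^ p * ι 0) := by gcongr
      _ = β ^ p * C₀ := by ring
  exact ⟨⟨_, hbound⟩, (bvNorm_le hp hv (by positivity) hbound).trans_eq (by ring)⟩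

theorem stmt19 (p : ℝ) (hp : 1 ≤ p) (F G : ℝ → ℂ)
    (hF : BddAbove (varSums p F 0 1)) (hG : BddAbove (varSums p G 0 1))
    (hnondeg : 0 < sInf ((fun x => ‖F x‖ + ‖G x‖) '' Set.Icc (0:ℝ) 1)) :
    ∀ ε > 0, ∃ δ > 0, ∀ h : ℝ → ℂ, BddAbove (varSums p h 0 1) → bvNorm p h < δ →
      ∃ f g : ℝ → ℂ, BddAbove (varSums p f 0 1) ∧ BddAbove (varSums p g 0 1) ∧
        (∀ x ∈ Set.Icc (0:ℝ) 1, f x * g x = F x * G x + h x) ∧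
        bvNorm p (fun x => f x - F x) < ε ∧ bvNorm p (fun x => g x - G x) < ε := by
  intro ε hε
  have hp0 : 0 < p := by linarith
  obtain ⟨c, hc, hFG⟩ : ∃ c > 0, ∀ x ∈ Icc (0 : ℝ) 1, c ≤ ‖F x‖ + ‖G x‖ :=
    ⟨_, hnondeg, fun x hx => csInf_le ⟨0, by rintro _ ⟨y, -, rfl⟩; positivity⟩ ⟨x, hx, rfl⟩⟩
  obtain ⟨T, hT, hTF, hTG⟩ := exists_switchesFinitely_split hp0 hF hc hFG
  obtain ⟨CG, hCG, hv⟩ := exists_bvNorm_indicator_div_le hp0 hG hT.compl (by positivity) hTG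
  obtain ⟨CF, hCF, hw⟩ := exists_bvNorm_indicator_div_le hp0 hF hT (by positivity) hTF
  refine ⟨min (ε / CG) (ε / CF), by positivity, fun h hh hδ => ?_⟩
  obtain ⟨hv, hvε⟩ := hv h hh
  obtain ⟨hw, hwε⟩ := hw h hh
  refine ⟨F + Tᶜ.indicator (h / G), G + T.indicator (h / F), bddAbove_varSums_add hp0.le hF hv,
    bddAbove_varSums_add hp0.le hG hw, fun x hx => ?_, ?_, ?_⟩
  · by_cases hxT : x ∈ T
    · have : F x ≠ 0 := norm_pos_iff.1 ((by positivity : 0 < c / 3).trans_le (hTF x hx hxT))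
      rw [Pi.add_apply, Pi.add_apply, indicator_of_notMem (not_not_intro hxT),
        indicator_of_mem hxT, Pi.div_apply, add_zero]
      field_simp
    · have : G x ≠ 0 := norm_pos_iff.1 ((by positivity : 0 < c / 3).trans_le (hTG x hx hxT))
      rw [Pi.add_apply, Pi.add_apply, indicator_of_mem (mem_compl hxT), indicator_of_notMem hxT,
        Pi.div_apply, add_zero]
      field_simp
  · simpa using hvε.trans_lt ((lt_div_iff₀' hCG).1 (hδ.trans_le (min_le_left _ _)))
  · simpa using hwε.trans_lt ((lt_div_iff₀' hCF).1 (hδ.trans_le (min_le_right _ _)))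
end
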